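/- arXiv:2508.08377 — 6 statements merged into one kernel-verified Lean document; each statement's English description precedes it below -/
import Mathlib

section
/- Let p be a prime with p > d, q = p^n, and ℓ ∈ P_d. For every ζ ∈ W_ℓ, any two solutions (t₁,…,t_d) ∈ F_q^d of the system Σ_i t_i^j = ζ_j (1 ≤ j ≤ d) are permutations of each other, so π_ζ(f) := ∏_{i=1}^d f(γ(t_i)) is well defined for f : Γ → ℂ; moreover Σ_{ζ∈W_ℓ} |π_ζ(f)|² = (|W_ℓ|/q!) · Σ_ℓ(x), where x = (x_t)_{t∈F_q} with x_t = |f(γ(t))|². -/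
open Finset

/-- The standard additive character `e(y) = exp(2πi Tr(y)/p)` on a finite field of
characteristic `p`, where `Tr` is the field trace to `ZMod p`. -/
noncomputable def charE (p : ℕ) {F : Type} [Field F] [Fintype F] [Algebra (ZMod p) F]
    (y : F) : ℂ :=
  Complex.exp (2 * Real.pi * Complex.I * ((Algebra.trace (ZMod p) F y).val : ℂ) / (p : ℂ))

/-- The moment curve `γ(ξ) = (ξ, ξ², …, ξ^d)`. -/
def mom (d : ℕ) {F : Type} [Monoid F] (ξ : F) : Fin d → F := fun i => ξ ^ ((i : ℕ) + 1)

/-- The extension operator `(fσ)^∨(x) = q⁻¹ ∑_ξ f(ξ) e(x·γ(ξ))`. -/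
noncomputable def extOp (p d : ℕ) {F : Type} [Field F] [Fintype F] [Algebra (ZMod p) F]
    (f : F → ℂ) (x : Fin d → F) : ℂ :=
  (Fintype.card F : ℂ)⁻¹ * ∑ ξ : F, f ξ * charE p (∑ i, x i * mom d ξ i)

/-- `‖(fσ)^∨‖_{L^{2d}(F_q^d, dx)}`. -/
noncomputable def extNorm (p d : ℕ) {F : Type} [Field F] [Fintype F] [Algebra (ZMod p) F]
    (f : F → ℂ) : ℝ :=
  (∑ x : Fin d → F, ‖extOp p d f x‖ ^ (2 * d)) ^ ((1 : ℝ) / (2 * d))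

/-- `‖f‖_{L²(Γ, dσ)}`. -/
noncomputable def l2Norm {F : Type} [Fintype F] (f : F → ℂ) : ℝ :=
  Real.sqrt ((Fintype.card F : ℝ)⁻¹ * ∑ ξ : F, ‖f ξ‖ ^ 2)

/-- The set of partitions of `d`, written as decreasing `d`-tuples. -/
def Pd (d : ℕ) : Finset (Fin d → Fin (d + 1)) :=
  univ.filter fun ℓ =>
    (∀ i j : Fin d, i ≤ j → (ℓ j : ℕ) ≤ (ℓ i : ℕ)) ∧ (∑ i, (ℓ i : ℕ)) = d

/-- `ℓ! = ℓ₁!·…·ℓ_d!`. -/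
def lfact {d : ℕ} (ℓ : Fin d → Fin (d + 1)) : ℕ := ∏ i, Nat.factorial (ℓ i)

/-- `binom(d,ℓ) = d!/ℓ!`. -/
def dchoose (d : ℕ) (ℓ : Fin d → Fin (d + 1)) : ℕ := Nat.factorial d / lfact ℓ

/-- `b_j(ℓ) = #{i : ℓ_i = j}`. -/
def bj {d : ℕ} (ℓ : Fin d → Fin (d + 1)) (j : ℕ) : ℕ :=
  (univ.filter fun i => (ℓ i : ℕ) = j).card

/-- `b_0(ℓ) = #{i : ℓ_i = 0} + (q - d)`. -/
def b0 (q : ℕ) {d : ℕ} (ℓ : Fin d → Fin (d + 1)) : ℕ := bj ℓ 0 + (q - d)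

/-- `binom(q, b(ℓ)) = q!/(b_0(ℓ)!·b_1(ℓ)!·…·b_d(ℓ)!)`. -/
def qmultinom (q d : ℕ) (ℓ : Fin d → Fin (d + 1)) : ℕ :=
  Nat.factorial q / ((b0 q ℓ).factorial * ∏ j ∈ Finset.Icc 1 d, (bj ℓ j).factorial)

/-- The conjectured optimal constant raised to the power `2d`:
`A = q^{-d} ∑_{ℓ∈P_d} binom(d,ℓ)² binom(q,b(ℓ))`. -/
noncomputable def Aconst (q d : ℕ) : ℝ :=
  ((q : ℝ) ^ d)⁻¹ * ∑ ℓ ∈ Pd d, ((dchoose d ℓ : ℝ) ^ 2 * (qmultinom q d ℓ : ℝ))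

/-- The elementary symmetric functions `e_k` obtained from the power sums
`ζ₁, …, ζ_d` via Newton's identities. -/
noncomputable def newtonE {F : Type} [Field F] {d : ℕ} (ζ : Fin d → F) : ℕ → F
  | 0 => 1
  | k + 1 =>
      (((k + 1 : ℕ) : F))⁻¹ *
        ∑ i ∈ Finset.range (k + 1),
          (-1 : F) ^ i * newtonE ζ (k - i) * (if h : i < d then ζ ⟨i, h⟩ else 0)

/-- The polynomial `P_ζ(X) = X^d − s₁X^{d−1} + … + (−1)^d s_d` whose elementary symmetric
coefficients are obtained from the power sums `ζ` via Newton's identities. -/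
noncomputable def Pzeta {F : Type} [Field F] {d : ℕ} (ζ : Fin d → F) : Polynomial F :=
  ∑ k ∈ Finset.range (d + 1), Polynomial.C ((-1 : F) ^ k * newtonE ζ k) * Polynomial.X ^ (d - k)

/-- `W_ℓ`: the set of `ζ` such that `P_ζ` splits completely over `F` with root
multiplicities given by the nonzero parts of `ℓ`. -/
def Wset (F : Type) [Field F] {d : ℕ} (ℓ : Fin d → Fin (d + 1)) : Set (Fin d → F) :=
  {ζ | ∃ r : Fin d → F,
    (∀ i j : Fin d, (ℓ i : ℕ) ≠ 0 → (ℓ j : ℕ) ≠ 0 → i ≠ j → r i ≠ r j) ∧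
    Pzeta ζ = ∏ i : Fin d, (Polynomial.X - Polynomial.C (r i)) ^ (ℓ i : ℕ)}

/-- `W_ℓ` as a finite set. -/
noncomputable def Wfin {F : Type} [Field F] [Fintype F] {d : ℕ}
    (ℓ : Fin d → Fin (d + 1)) : Finset (Fin d → F) :=
  (Set.toFinite (Wset F ℓ)).toFinset

/-- The symmetric sum `Σ_ℓ(x) = ∑_{τ} x_{τ(1)}^{ℓ₁} ⋯ x_{τ(d)}^{ℓ_d}`, the sum running
over all bijections `τ : {1,…,q} → F_q` (a sum of `q!` terms). -/
noncomputable def symSumF {F : Type} [Fintype F] [DecidableEq F] {d : ℕ}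
    (ℓ : Fin d → Fin (d + 1)) (x : F → ℝ) : ℝ :=
  ∑ τ : Fin (Fintype.card F) ≃ F, ∏ i : Fin d,
    if h : (i : ℕ) < Fintype.card F then x (τ ⟨(i : ℕ), h⟩) ^ (ℓ i : ℕ) else 0

/-- The symmetric sum `Σ_ℓ(x) = ∑_{τ∈S_q} x_{τ(1)}^{ℓ₁} ⋯ x_{τ(d)}^{ℓ_d}` in `q` variables. -/
noncomputable def symSum (d q : ℕ) (ℓ : Fin d → Fin (d + 1)) (x : Fin q → ℝ) : ℝ :=
  ∑ τ : Equiv.Perm (Fin q), ∏ i : Fin d,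
    if h : (i : ℕ) < q then x (τ ⟨(i : ℕ), h⟩) ^ (ℓ i : ℕ) else 0

/-- Dominance order on partitions. -/
def domLE {d : ℕ} (ℓ ℓ' : Fin d → Fin (d + 1)) : Prop :=
  ∀ k : Fin d, (∑ i ∈ univ.filter (· ≤ k), (ℓ i : ℕ)) ≤ ∑ i ∈ univ.filter (· ≤ k), (ℓ' i : ℕ)

/-- `ρ(ℓ)`: the number of nonzero parts of `ℓ`. -/
def rho {d : ℕ} (ℓ : Fin d → Fin (d + 1)) : ℕ := (univ.filter fun i => (ℓ i : ℕ) ≠ 0).card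

/-- The partition `(1,1,…,1)`. -/
def onesPart (d : ℕ) : Fin d → Fin (d + 1) := fun _ => 1

/-- The partition `(2,1,…,1,0)`. -/
def part21 (d : ℕ) : Fin d → Fin (d + 1) := fun i =>
  if (i : ℕ) = 0 then 2 else if (i : ℕ) = d - 1 then 0 else 1

/-- The partition `(2,2,1,…,1,0,0)`. -/
def part221 (d : ℕ) : Fin d → Fin (d + 1) := fun i =>
  if (i : ℕ) ≤ 1 then 2 else if d - 2 ≤ (i : ℕ) then 0 else 1

/-- The partition `(d,0,…,0)`. -/
def topPart (d : ℕ) : Fin d → Fin (d + 1) := fun i =>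
  if (i : ℕ) = 0 then Fin.last d else 0

/-- `A` written in terms of `|W_ℓ|`. -/
noncomputable def AconstW (F : Type) [Field F] [Fintype F] (d : ℕ) : ℝ :=
  ((Fintype.card F : ℝ) ^ d)⁻¹ *
    ∑ ℓ ∈ Pd d, (dchoose d ℓ : ℝ) ^ 2 * ((Wfin (F := F) ℓ).card : ℝ)

/-- `ω_ℓ = (A − binom(d,ℓ))·binom(d,ℓ)·|W_ℓ|`. -/
noncomputable def omegaW (F : Type) [Field F] [Fintype F] {d : ℕ}
    (ℓ : Fin d → Fin (d + 1)) : ℝ :=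
  (AconstW F d - (dchoose d ℓ : ℝ)) * (dchoose d ℓ : ℝ) * ((Wfin (F := F) ℓ).card : ℝ)

/-!
Since `p > d`, the integer `d!` is invertible in `F`, so Newton's identities recover the elementary
symmetric functions of any `t ∈ F^d` from its power sums: if `∑ᵢ tᵢ^j = ζ_j` then
`P_ζ = ∏ᵢ (X - tᵢ)`, and the multiset of roots of `P_ζ` determines `t` up to order.

For the sum, a bijection `τ : {1,…,q} → F` gives the point `ζ(τ) ∈ W_ℓ` whose polynomial has the
roots `τ(i)` with multiplicities `ℓᵢ`, and the term of `τ` in `Σ_ℓ(x)` is the product of `x` over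
these roots. Composing with a permutation of `F` that matches the roots of `ζ₁` with those of `ζ₂`
maps the fibre of `ζ₁` injectively into that of `ζ₂`, so all `|W_ℓ|` fibres of `τ ↦ ζ(τ)` have
`q!/|W_ℓ|` elements.
-/

open Polynomial

theorem Equiv.Perm.exists_eq_comp_of_map_univ_eq {ι α : Type*} [Fintype ι] [DecidableEq α]
    {s t : ι → α} (h : univ.val.map s = univ.val.map t) :
    ∃ σ : Equiv.Perm ι, ∀ i, s i = t (σ i) := by
  have hcount : ∀ (u : ι → α) a, Multiset.count a (univ.val.map u) = Fintype.card {i // u i = a} :=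
    fun u a => by
      rw [Multiset.count_map, Fintype.card_subtype]
      simp only [eq_comm]
      rfl
  have hfiber : ∀ a, Fintype.card {i // s i = a} = Fintype.card {i // t i = a} := fun a => by
    rw [← hcount, ← hcount, h]
  exact ⟨Equiv.ofFiberEquiv fun a => Fintype.equivOfCardEq (hfiber a),
    fun i => (Equiv.ofFiberEquiv_map _ i).symm⟩

theorem Finset.sum_eq_card_div_card_mul_sum_comp {α β K : Type*} [DecidableEq β] [Semifield K]
    [CharZero K] {s : Finset α} {t : Finset β} {g : α → β} (hg : ∀ a ∈ s, g a ∈ t)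
    (hfiber : ∀ b ∈ t, ∀ b' ∈ t, #{a ∈ s | g a = b} ≤ #{a ∈ s | g a = b'}) (hs : s.Nonempty)
    (f : β → K) : ∑ b ∈ t, f b = #t / #s * ∑ a ∈ s, f (g a) := by
  obtain ⟨a₀, ha₀⟩ := hs
  have ha₀' : a₀ ∈ {a ∈ s | g a = g a₀} := mem_filter.2 ⟨ha₀, rfl⟩
  set c := #{a ∈ s | g a = g a₀}
  have hc : ∀ b ∈ t, #{a ∈ s | g a = b} = c := fun b hb =>
    le_antisymm (hfiber _ hb _ (hg a₀ ha₀)) (hfiber _ (hg a₀ ha₀) _ hb)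
  have hc0 : (c : K) ≠ 0 := Nat.cast_ne_zero.2 (card_pos.2 ⟨a₀, ha₀'⟩).ne'
  have ht0 : (#t : K) ≠ 0 := Nat.cast_ne_zero.2 (card_pos.2 ⟨_, hg a₀ ha₀⟩).ne'
  have hcard : #s = #t * c := by
    rw [card_eq_sum_card_fiberwise hg, sum_congr rfl hc, sum_const, smul_eq_mul]
  have hsum : ∑ a ∈ s, f (g a) = c * ∑ b ∈ t, f b := by
    rw [← sum_fiberwise_of_maps_to hg, mul_sum]
    refine sum_congr rfl fun b hb => ?_
    rw [sum_congr rfl fun a ha => by rw [(mem_filter.1 ha).2], sum_const, hc b hb, nsmul_eq_mul]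
  rw [hsum, hcard, Nat.cast_mul]
  field_simp

section RepeatMultiset

variable {α β : Type*} {d : ℕ}

def repeatMultiset (k : Fin d → ℕ) (r : Fin d → α) : Multiset α := ∑ i, k i • {r i}

variable (k : Fin d → ℕ) (r : Fin d → α)

theorem card_repeatMultiset : Multiset.card (repeatMultiset k r) = ∑ i, k i := by
  simp [repeatMultiset]

theorem map_repeatMultiset (g : α → β) :
    (repeatMultiset k r).map g = repeatMultiset k (g ∘ r) := by
  rw [repeatMultiset, show Multiset.map g = Multiset.mapAddMonoidHom g from rfl, map_sum]
  simp [repeatMultiset, Multiset.map_nsmul]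

theorem prod_repeatMultiset {M : Type*} [CommMonoid M] (r : Fin d → M) :
    (repeatMultiset k r).prod = ∏ i, r i ^ k i := by
  simp [repeatMultiset, Multiset.prod_sum, Multiset.nsmul_singleton]

theorem repeatMultiset_congr {r' : Fin d → α} (h : ∀ i, k i ≠ 0 → r i = r' i) :
    repeatMultiset k r = repeatMultiset k r' := by
  refine sum_congr rfl fun i _ => ?_
  by_cases hi : k i = 0
  · simp [hi]
  · rw [h i hi]

theorem roots_prod_X_sub_C_pow {F : Type*} [Field F] (r : Fin d → F) :
    (∏ i, (X - C (r i)) ^ k i).roots = repeatMultiset k r := by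
  rw [← prod_repeatMultiset, ← Function.comp_def (fun a => X - C a) r, ← map_repeatMultiset,
    roots_multiset_prod_X_sub_C]

end RepeatMultiset

theorem Multiset.natCast_succ_mul_esymm_succ {R : Type*} [CommRing R] (m : Multiset R) (k : ℕ) :
    ((k + 1 : ℕ) : R) * m.esymm (k + 1) =
      ∑ i ∈ Finset.range (k + 1), (-1) ^ i * m.esymm (k - i) * (m.map (· ^ (i + 1))).sum := by
  have hm : m = univ.val.map m.toList.get := by
    rw [Fin.univ_val_map, List.ofFn_get, Multiset.coe_toList]
  have hnewton := congrArg (MvPolynomial.aeval m.toList.get)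
    (MvPolynomial.mul_esymm_eq_sum (Fin m.toList.length) R (k + 1))
  have hpsum : ∀ j, ∑ x, m.toList.get x ^ j = (m.map (· ^ j)).sum := fun j => by
    conv_rhs => rw [hm, Multiset.map_map]
    rfl
  simp only [map_mul, map_sum, map_pow, map_neg, map_one, map_natCast,
    MvPolynomial.aeval_esymm_eq_multiset_esymm, ← hm, MvPolynomial.psum, MvPolynomial.aeval_X,
    hpsum] at hnewton
  -- reindex the antidiagonal `a₁ + a₂ = k + 1`, `a₁ ≤ k`, by `a = (k - i, i + 1)`
  rw [hnewton, sum_filter, Finset.Nat.sum_antidiagonal_succ', if_neg (lt_irrefl _), zero_add,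
    Finset.Nat.sum_antidiagonal_swap.symm, Finset.Nat.sum_antidiagonal_eq_sum_range_succ_mk,
    mul_sum]
  refine sum_congr rfl fun i hi => ?_
  have hik : i ≤ k := Nat.lt_succ_iff.1 (mem_range.1 hi)
  dsimp only [Prod.fst_swap, Prod.snd_swap]
  rw [if_pos (by omega), ← mul_assoc, ← mul_assoc, ← pow_add,
    show k + 1 + 1 + (k - i) = i + 2 * (k + 1 - i) by omega, pow_add, pow_mul, neg_one_sq, one_pow,
    mul_one]

section PowerSums

variable {F : Type} [Field F] {d : ℕ}

def powerSums (d : ℕ) (m : Multiset F) : Fin d → F :=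
  fun j => (m.map (· ^ ((j : ℕ) + 1))).sum

theorem powerSums_map_univ (t : Fin d → F) :
    powerSums d (univ.val.map t) = fun j : Fin d => ∑ i, t i ^ ((j : ℕ) + 1) := by
  funext j
  rw [powerSums, Multiset.map_map]
  rfl

theorem newtonE_powerSums (hd : (d.factorial : F) ≠ 0) (m : Multiset F) {k : ℕ} (hk : k ≤ d) :
    newtonE (powerSums d m) k = m.esymm k := by
  induction k using Nat.strong_induction_on with
  | _ k ih =>
    rcases k with _ | k
    · simp [newtonE, Multiset.esymm]
    have hk0 : ((k + 1 : ℕ) : F) ≠ 0 := fun h =>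
      hd (zero_dvd_iff.1 (h ▸ Nat.cast_dvd_cast (Nat.dvd_factorial k.succ_pos hk)))
    rw [newtonE, ← inv_mul_cancel_left₀ hk0 (m.esymm (k + 1)),
      Multiset.natCast_succ_mul_esymm_succ]
    congr 1
    refine sum_congr rfl fun i hi => ?_
    have hik : i ≤ k := Nat.lt_succ_iff.1 (mem_range.1 hi)
    rw [ih (k - i) (by omega) (by omega), dif_pos (by omega)]
    rfl

theorem Pzeta_powerSums (hd : (d.factorial : F) ≠ 0) {m : Multiset F}
    (hm : Multiset.card m = d) : Pzeta (powerSums d m) = (m.map fun a => X - C a).prod := by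
  rw [Multiset.prod_X_sub_X_eq_sum_esymm, hm, Pzeta]
  refine sum_congr rfl fun k hk => ?_
  rw [newtonE_powerSums hd m (Nat.lt_succ_iff.1 (mem_range.1 hk))]
  simp only [map_mul, map_pow, map_neg, map_one]
  ring

theorem roots_Pzeta_powerSums (hd : (d.factorial : F) ≠ 0) {m : Multiset F}
    (hm : Multiset.card m = d) : (Pzeta (powerSums d m)).roots = m := by
  rw [Pzeta_powerSums hd hm, roots_multiset_prod_X_sub_C]

theorem map_univ_eq_roots_Pzeta (hd : (d.factorial : F) ≠ 0) {ζ t : Fin d → F}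
    (ht : ∀ j : Fin d, ∑ i, t i ^ ((j : ℕ) + 1) = ζ j) : univ.val.map t = (Pzeta ζ).roots := by
  have hζ : ζ = powerSums d (univ.val.map t) := by
    rw [powerSums_map_univ]
    exact funext fun j => (ht j).symm
  rw [hζ, roots_Pzeta_powerSums hd (by simp)]

end PowerSums

section Wset

variable {F : Type} [Field F] {d : ℕ} (ℓ : Fin d → Fin (d + 1))

def partPowerSums (r : Fin d → F) : Fin d → F :=
  powerSums d (repeatMultiset (fun i => (ℓ i : ℕ)) r)

variable {ℓ}

theorem roots_Pzeta_partPowerSums (hd : (d.factorial : F) ≠ 0) (hℓ : ∑ i, (ℓ i : ℕ) = d)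
    (r : Fin d → F) :
    (Pzeta (partPowerSums ℓ r)).roots = repeatMultiset (fun i => (ℓ i : ℕ)) r :=
  roots_Pzeta_powerSums hd (by rw [card_repeatMultiset, hℓ])

theorem partPowerSums_mem_Wset (hd : (d.factorial : F) ≠ 0) (hℓ : ∑ i, (ℓ i : ℕ) = d)
    {r : Fin d → F} (hr : Function.Injective r) : partPowerSums ℓ r ∈ Wset F ℓ := by
  refine ⟨r, fun i j _ _ hij => hr.ne hij, ?_⟩
  rw [partPowerSums, Pzeta_powerSums hd (by rw [card_repeatMultiset, hℓ]), map_repeatMultiset,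
    prod_repeatMultiset]
  rfl

theorem exists_perm_partPowerSums_eq (hd : (d.factorial : F) ≠ 0) (hℓ : ∑ i, (ℓ i : ℕ) = d)
    (hW : ∀ ζ ∈ Wset F ℓ, powerSums d (Pzeta ζ).roots = ζ) {ζ₁ ζ₂ : Fin d → F}
    (h₁ : ζ₁ ∈ Wset F ℓ) (h₂ : ζ₂ ∈ Wset F ℓ) :
    ∃ σ : Equiv.Perm F, ∀ r, partPowerSums ℓ r = ζ₁ → partPowerSums ℓ (σ ∘ r) = ζ₂ := by
  obtain ⟨r₁, hr₁, hP₁⟩ := h₁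
  obtain ⟨r₂, hr₂, hP₂⟩ := id h₂
  have hinj : ∀ r : Fin d → F, (∀ i j, (ℓ i : ℕ) ≠ 0 → (ℓ j : ℕ) ≠ 0 → i ≠ j → r i ≠ r j) →
      Function.Injective fun i : {i // (ℓ i : ℕ) ≠ 0} => r i := fun r hr i j hij =>
    Subtype.ext (by_contra fun hne => hr i j i.2 j.2 hne hij)
  obtain ⟨σ, hσ⟩ := Equiv.Perm.exists_extending_pair _ _ (hinj r₁ hr₁) (hinj r₂ hr₂)
  refine ⟨σ, fun r hr => ?_⟩
  have hroots :
      repeatMultiset (fun i => (ℓ i : ℕ)) r = repeatMultiset (fun i => (ℓ i : ℕ)) r₁ := by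
    rw [← roots_Pzeta_partPowerSums hd hℓ, hr, hP₁, roots_prod_X_sub_C_pow]
  rw [← hW ζ₂ h₂, hP₂, roots_prod_X_sub_C_pow, partPowerSums, ← map_repeatMultiset, hroots,
    map_repeatMultiset, repeatMultiset_congr _ _ fun i hi => hσ ⟨i, hi⟩]

variable [Fintype F] [DecidableEq F]

theorem card_filter_partPowerSums_le {ι : Type*} [Fintype ι] [DecidableEq ι] (e : Fin d → ι)
    (hd : (d.factorial : F) ≠ 0) (hℓ : ∑ i, (ℓ i : ℕ) = d)
    (hW : ∀ ζ ∈ Wset F ℓ, powerSums d (Pzeta ζ).roots = ζ) {ζ₁ ζ₂ : Fin d → F}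
    (h₁ : ζ₁ ∈ Wset F ℓ) (h₂ : ζ₂ ∈ Wset F ℓ) :
    #{τ : ι ≃ F | partPowerSums ℓ (τ ∘ e) = ζ₁} ≤
      #{τ : ι ≃ F | partPowerSums ℓ (τ ∘ e) = ζ₂} := by
  obtain ⟨σ, hσ⟩ := exists_perm_partPowerSums_eq hd hℓ hW h₁ h₂
  refine card_le_card_of_injOn (·.trans σ) (fun τ hτ => ?_) fun τ₁ _ τ₂ _ h => ?_
  · simp only [coe_filter, mem_univ, true_and, Set.mem_ofPred_eq] at hτ ⊢
    exact hσ _ hτ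
  · exact Equiv.ext fun y => σ.injective (Equiv.congr_fun h y)

theorem sum_prod_roots_Pzeta_eq (hd : (d.factorial : F) ≠ 0) (hℓ : ∑ i, (ℓ i : ℕ) = d)
    (hW : ∀ ζ ∈ Wset F ℓ, powerSums d (Pzeta ζ).roots = ζ) (hdq : d ≤ Fintype.card F)
    (x : F → ℝ) :
    ∑ ζ ∈ Wfin ℓ, ((Pzeta ζ).roots.map x).prod =
      #(Wfin (F := F) ℓ) / (Fintype.card F).factorial * symSumF ℓ x := by
  have hWfin : ∀ ζ, ζ ∈ Wfin (F := F) ℓ ↔ ζ ∈ Wset F ℓ := fun ζ => Set.Finite.mem_toFinset _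
  have hsym : symSumF ℓ x = ∑ τ : Fin (Fintype.card F) ≃ F,
      ((Pzeta (partPowerSums ℓ (τ ∘ Fin.castLE hdq))).roots.map x).prod := by
    refine sum_congr rfl fun τ _ => ?_
    rw [roots_Pzeta_partPowerSums hd hℓ, map_repeatMultiset, prod_repeatMultiset]
    exact prod_congr rfl fun i _ => dif_pos (i.2.trans_le hdq)
  have hcard : #(univ : Finset (Fin (Fintype.card F) ≃ F)) = (Fintype.card F).factorial := by
    rw [card_univ, Fintype.card_equiv (Fintype.equivFin F).symm, Fintype.card_fin]
  rw [hsym, ← hcard]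
  refine sum_eq_card_div_card_mul_sum_comp (fun τ _ => (hWfin _).2 ?_)
    (fun ζ₁ h₁ ζ₂ h₂ => card_filter_partPowerSums_le _ hd hℓ hW ((hWfin _).1 h₁) ((hWfin _).1 h₂))
    ⟨(Fintype.equivFin F).symm, mem_univ _⟩ _
  exact partPowerSums_mem_Wset hd hℓ (τ.injective.comp (Fin.castLE_injective hdq))

end Wset

theorem symmetric_sum_over_Wset
    {p n d : ℕ} (hp : p.Prime) (hpd : d < p)
    {F : Type} [Field F] [Fintype F] [DecidableEq F]
    (hcard : Fintype.card F = p ^ n)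
    (ℓ : Fin d → Fin (d + 1)) (hℓ : ℓ ∈ Pd d) :
    (∀ ζ ∈ Wset F ℓ, ∀ t s : Fin d → F,
      (∀ j : Fin d, ∑ i, t i ^ ((j : ℕ) + 1) = ζ j) →
      (∀ j : Fin d, ∑ i, s i ^ ((j : ℕ) + 1) = ζ j) →
      ∃ π : Equiv.Perm (Fin d), ∀ i, s i = t (π i)) ∧
    (∀ f : F → ℂ, ∀ T : (Fin d → F) → (Fin d → F),
      (∀ ζ ∈ Wfin (F := F) ℓ, ∀ j : Fin d, ∑ i, T ζ i ^ ((j : ℕ) + 1) = ζ j) →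
      ∑ ζ ∈ Wfin (F := F) ℓ, ‖∏ i, f (T ζ i)‖ ^ 2 =
        ((Wfin (F := F) ℓ).card : ℝ) / (Nat.factorial (Fintype.card F) : ℝ) *
          symSumF ℓ fun t => ‖f t‖ ^ 2) := by
  have : Fact p.Prime := ⟨hp⟩
  have : CharP F p := charP_of_card_eq_prime_pow hcard
  have hd : (d.factorial : F) ≠ 0 := by
    rw [Ne, CharP.cast_eq_zero_iff F p, hp.dvd_factorial]
    omega
  have hdq : d ≤ Fintype.card F := hpd.le.trans <|
    Nat.le_of_dvd Fintype.card_pos ((CharP.cast_eq_zero_iff F p _).1 (Nat.cast_card_eq_zero F))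
  have hℓsum : ∑ i, (ℓ i : ℕ) = d := (mem_filter.1 hℓ).2.2
  refine ⟨fun ζ _ t s ht hs => Equiv.Perm.exists_eq_comp_of_map_univ_eq
    ((map_univ_eq_roots_Pzeta hd hs).trans (map_univ_eq_roots_Pzeta hd ht).symm), fun f T hT => ?_⟩
  have hW : ∀ ζ ∈ Wset F ℓ, powerSums d (Pzeta ζ).roots = ζ := fun ζ hζ => by
    have hTζ := hT ζ ((Set.Finite.mem_toFinset _).2 hζ)
    rw [← map_univ_eq_roots_Pzeta hd hTζ, powerSums_map_univ]
    exact funext hTζ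
  rw [← sum_prod_roots_Pzeta_eq hd hℓsum hW hdq]
  refine sum_congr rfl fun ζ hζ => ?_
  rw [← map_univ_eq_roots_Pzeta hd (hT ζ hζ), Multiset.map_map, norm_prod, ← prod_pow]
  rfl
end

section
/- (Muirhead's inequality with full equality characterization for nonnegative variables.) Let d, q ∈ ℕ with d ≤ q, let x₁,…,x_q be nonnegative real numbers, and let ℓ, ℓ' ∈ P_d with ℓ ≤ ℓ' in the dominance order. Then Σ_ℓ(x) ≤ Σ_{ℓ'}(x), and equality holds if and only if at least one of the following conditions holds: (i) ℓ = ℓ'; (ii) x₁ = x₂ = … = x_q; (iii) at least q − ρ(ℓ') + 1 of the numbers x₁,…,x_q are zero (in which case both sides are zero); (iv) ρ(ℓ) = ρ(ℓ'), exactly k of the x_i are zero for some k ≤ q − ρ(ℓ'), and the remaining q − k positive numbers are all equal. -/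
open Finset

/-!
Write `transfer b J K` for the exponent vector obtained from `b` by moving one unit from `b J`
to `b K ≤ b J - 2`. Pairing each permutation `τ` with `τ * swap (e J) (e K)` shows that a
transfer lowers the symmetric sum by half of `∑_τ transferGap`, where, with `A, B` the
variables placed at `J, K` and `s = b J - b K - 1 ≥ 1`, the summand is
`C (A B)^(b K) (A^s - B^s) (A - B) ≥ 0`. Two sorted exponent vectors comparable in the dominance
order are joined by a chain of transfers, which gives the inequality.

If equality holds and `ℓ ≠ ℓ'`, the gap of the last transfer vanishes for every `τ`; placing
arbitrary nonzero variables at `J` and `K` shows that all nonzero `x i` coincide. For such `x`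
each term of the symmetric sum is `c ^ d` or `0` according to whether the support of the
exponents lands on nonzero variables. Supports only grow along the chain, and a strictly larger
support for `ℓ` loses a term as soon as some `x i` vanishes.
-/

open Equiv Relation

section Transfer

variable {ι : Type*}

lemma ne_of_add_two_le {b : ι → ℕ} {J K : ι} (h : b K + 2 ≤ b J) : J ≠ K := by
  rintro rfl
  omega

lemma prod_pow_pos {b : ι → ℕ} {y : ι → ℝ} {s : Finset ι} (hy : ∀ i, 0 ≤ y i)
    (hb : ∀ i ∈ s, b i ≠ 0 → y i ≠ 0) : 0 < ∏ i ∈ s, y i ^ b i := by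
  refine prod_pos fun i hi => ?_
  by_cases hbi : b i = 0
  · simp [hbi]
  · exact pow_pos ((hy i).lt_of_ne' (hb i hi hbi)) _

lemma prod_pow_eq_ite [Fintype ι] {b : ι → ℕ} {y : ι → ℝ} {c : ℝ}
    (hy : ∀ i, y i ≠ 0 → y i = c) :
    ∏ i, y i ^ b i = if ∀ i, b i ≠ 0 → y i ≠ 0 then c ^ ∑ i, b i else 0 := by
  split_ifs with h
  · rw [← prod_pow_eq_pow_sum]
    refine prod_congr rfl fun i _ => ?_
    by_cases hbi : b i = 0
    · simp [hbi]
    · rw [hy i (h i hbi)]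
  · obtain ⟨i, hbi, hyi⟩ : ∃ i, b i ≠ 0 ∧ y i = 0 := by simpa using h
    exact prod_eq_zero (mem_univ i) (by rw [hyi, zero_pow hbi])

variable [DecidableEq ι]

def transfer (b : ι → ℕ) (J K : ι) : ι → ℕ :=
  Function.update (Function.update b J (b J - 1)) K (b K + 1)

def IsTransferOf (a b : ι → ℕ) : Prop := ∃ J K, b K + 2 ≤ b J ∧ a = transfer b J K

variable {b : ι → ℕ} {J K : ι}

lemma transfer_apply_left (h : b K + 2 ≤ b J) : transfer b J K J = b J - 1 := by
  simp [transfer, ne_of_add_two_le h]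

lemma transfer_apply_right : transfer b J K K = b K + 1 := by
  simp [transfer]

lemma transfer_apply_of_ne {i : ι} (hJ : i ≠ J) (hK : i ≠ K) : transfer b J K i = b i := by
  simp [transfer, hJ, hK]

lemma sum_transfer_add_ite (h : b K + 2 ≤ b J) (s : Finset ι) :
    ∑ i ∈ s, transfer b J K i + (if J ∈ s then 1 else 0) =
      ∑ i ∈ s, b i + (if K ∈ s then 1 else 0) := by
  have hpoint : ∀ i, transfer b J K i + (if i = J then 1 else 0) =
      b i + (if i = K then 1 else 0) := by
    intro i
    simp only [transfer, Function.update_apply]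
    split_ifs <;> subst_vars <;> omega
  rw [← sum_ite_eq' s J (fun _ => 1), ← sum_ite_eq' s K (fun _ => 1), ← sum_add_distrib,
    ← sum_add_distrib]
  exact sum_congr rfl fun i _ => hpoint i

lemma IsTransferOf.support_subset {a : ι → ℕ} (h : IsTransferOf a b) :
    ∀ i, b i ≠ 0 → a i ≠ 0 := by
  obtain ⟨J, K, hJK, rfl⟩ := h
  intro i
  simp only [transfer, Function.update_apply]
  split_ifs <;> omega

lemma support_subset_of_reflTransGen {a : ι → ℕ} (h : ReflTransGen IsTransferOf a b) :
    ∀ i, b i ≠ 0 → a i ≠ 0 := by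
  induction h with
  | refl => exact fun _ => id
  | tail _ hcb ih => exact fun i hi => ih i (hcb.support_subset i hi)

variable [Fintype ι]

lemma IsTransferOf.sum_eq {a : ι → ℕ} (h : IsTransferOf a b) : ∑ i, a i = ∑ i, b i := by
  obtain ⟨J, K, hJK, rfl⟩ := h
  simpa using sum_transfer_add_ite hJK univ

lemma sum_eq_of_reflTransGen {a : ι → ℕ} (h : ReflTransGen IsTransferOf a b) :
    ∑ i, a i = ∑ i, b i := by
  induction h with
  | refl => rfl
  | tail _ hcb ih => exact ih.trans hcb.sum_eq

def transferGap (y : ι → ℝ) (b : ι → ℕ) (J K : ι) : ℝ :=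
  (∏ i ∈ (univ.erase J).erase K, y i ^ b i) * (y J * y K) ^ b K *
    ((y J ^ (b J - b K - 1) - y K ^ (b J - b K - 1)) * (y J - y K))

lemma prod_eq_mul_mul_prod_erase_erase {M : Type*} [CommMonoid M] (f : ι → M) (hJK : J ≠ K) :
    ∏ i, f i = f J * f K * ∏ i ∈ (univ.erase J).erase K, f i := by
  rw [mul_assoc, mul_prod_erase _ f (mem_erase.2 ⟨hJK.symm, mem_univ K⟩),
    mul_prod_erase _ f (mem_univ J)]

lemma prod_pow_add_swap_sub_transfer (y : ι → ℝ) (h : b K + 2 ≤ b J) :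
    (∏ i, y i ^ b i + ∏ i, y (swap J K i) ^ b i) -
        (∏ i, y i ^ transfer b J K i + ∏ i, y (swap J K i) ^ transfer b J K i) =
      transferGap y b J K := by
  have hJK := ne_of_add_two_le h
  set C := ∏ i ∈ (univ.erase J).erase K, y i ^ b i
  have hrest : ∀ c : ι → ℕ, (∀ i ∈ (univ.erase J).erase K, c i = b i) →
      ∏ i ∈ (univ.erase J).erase K, y i ^ c i = C ∧
        ∏ i ∈ (univ.erase J).erase K, y (swap J K i) ^ c i = C := by
    intro c hc
    refine ⟨prod_congr rfl fun i hi => by rw [hc i hi], prod_congr rfl fun i hi => ?_⟩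
    simp only [mem_erase] at hi
    rw [swap_apply_of_ne_of_ne hi.2.1 hi.1, hc i (by simp [hi.1, hi.2.1])]
  obtain ⟨hb₁, hb₂⟩ := hrest b fun _ _ => rfl
  obtain ⟨ht₁, ht₂⟩ := hrest (transfer b J K) fun i hi => by
    simp only [mem_erase] at hi
    exact transfer_apply_of_ne hi.2.1 hi.1
  simp only [prod_eq_mul_mul_prod_erase_erase _ hJK, hb₁, hb₂, ht₁, ht₂, swap_apply_left,
    swap_apply_right, transfer_apply_left h, transfer_apply_right, transferGap]
  obtain ⟨s, hs⟩ := Nat.exists_eq_add_of_le h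
  rw [hs, show b K + 2 + s - 1 = b K + s + 1 by omega,
    show b K + 2 + s - b K - 1 = s + 1 by omega]
  ring

variable {y : ι → ℝ}

lemma transferGap_nonneg (hy : ∀ i, 0 ≤ y i) : 0 ≤ transferGap y b J K := by
  refine mul_nonneg (mul_nonneg (prod_nonneg fun i _ => pow_nonneg (hy i) _)
    (pow_nonneg (mul_nonneg (hy J) (hy K)) _)) ?_
  rcases le_total (y K) (y J) with hle | hle
  · exact mul_nonneg (sub_nonneg.2 (pow_le_pow_left₀ (hy K) hle _)) (sub_nonneg.2 hle)
  · exact mul_nonneg_of_nonpos_of_nonpos (sub_nonpos.2 (pow_le_pow_left₀ (hy J) hle _))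
      (sub_nonpos.2 hle)

lemma eq_of_transferGap_eq_zero (h : b K + 2 ≤ b J) (hy : ∀ i, 0 ≤ y i)
    (hpos : ∀ i, transfer b J K i ≠ 0 → y i ≠ 0) (hgap : transferGap y b J K = 0) :
    y J = y K := by
  have hJK := ne_of_add_two_le h
  have hC : 0 < ∏ i ∈ (univ.erase J).erase K, y i ^ b i := by
    refine prod_pow_pos hy fun i hi hbi => hpos i ?_
    simp only [mem_erase] at hi
    rwa [transfer_apply_of_ne hi.2.1 hi.1]
  have hJ : y J ≠ 0 := hpos J (by rw [transfer_apply_left h]; omega)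
  have hK : y K ≠ 0 := hpos K (by rw [transfer_apply_right]; omega)
  rcases mul_eq_zero.1 hgap with hzero | hzero
  · exact absurd hzero (mul_pos hC (pow_pos ((mul_nonneg (hy J) (hy K)).lt_of_ne'
      (mul_ne_zero hJ hK)) _)).ne'
  rcases mul_eq_zero.1 hzero with hpow | hsub
  · exact (pow_left_inj₀ (hy J) (hy K) (by omega)).1 (sub_eq_zero.1 hpow)
  · exact sub_eq_zero.1 hsub

end Transfer

section Dominance

variable {d : ℕ}

def DominanceLE (a b : Fin d → ℕ) : Prop := ∀ k, ∑ i ∈ Iic k, a i ≤ ∑ i ∈ Iic k, b i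

variable {a b : Fin d → ℕ}

lemma DominanceLE.exists_first_lt (hab : DominanceLE a b) (hne : a ≠ b) :
    ∃ j, a j < b j ∧ ∀ i < j, a i = b i := by
  obtain ⟨j, hj, hmin⟩ := wellFounded_lt.has_min {i | a i ≠ b i} (Function.ne_iff.1 hne)
  have heq : ∀ i < j, a i = b i := fun i hi => by_contra fun h => hmin i h hi
  refine ⟨j, lt_of_le_of_ne ?_ hj, heq⟩
  have hprefix : ∑ i ∈ Iio j, a i = ∑ i ∈ Iio j, b i :=
    sum_congr rfl fun i hi => heq i (mem_Iio.1 hi)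
  have := hab j
  rw [← Iio_insert, sum_insert (by simp), sum_insert (by simp), hprefix] at this
  omega

lemma exists_first_gt (hsum : ∑ i, a i = ∑ i, b i) {j : Fin d} (hj : a j < b j) :
    ∃ k, b k < a k ∧ ∀ i < k, a i ≤ b i := by
  have hex : ∃ k, b k < a k := by
    by_contra! hle
    exact (sum_lt_sum (fun i _ => hle i) ⟨j, mem_univ j, hj⟩).ne hsum
  obtain ⟨k, hk, hmin⟩ := wellFounded_lt.has_min {i | b i < a i} hex
  exact ⟨k, hk, fun i hi => not_lt.1 fun h => hmin i h hi⟩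

lemma exists_last_eq (b : Fin d → ℕ) (j : Fin d) :
    ∃ J, j ≤ J ∧ b J = b j ∧ ∀ i, J < i → b i ≠ b j := by
  obtain ⟨J, hJ, hmax⟩ :=
    wellFounded_gt.has_min {i | j ≤ i ∧ b i = b j} ⟨j, le_rfl, rfl⟩
  exact ⟨J, hJ.1, hJ.2, fun i hi h => hmax i ⟨hJ.1.trans hi.le, h⟩ hi⟩

lemma exists_first_eq (b : Fin d → ℕ) (k : Fin d) :
    ∃ K, K ≤ k ∧ b K = b k ∧ ∀ i, i < K → b i ≠ b k := by
  obtain ⟨K, hK, hmin⟩ :=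
    wellFounded_lt.has_min {i | i ≤ k ∧ b i = b k} ⟨k, le_rfl, rfl⟩
  exact ⟨K, hK.1, hK.2, fun i hi h => hmin i ⟨hi.le.trans hK.1, h⟩ hi⟩

lemma antitone_transfer {J K : Fin d} (hb : Antitone b) (h : b K + 2 ≤ b J)
    (hJ : ∀ i, J < i → b i < b J) (hK : ∀ i, i < K → b K < b i) :
    Antitone (transfer b J K) := by
  intro i i' hii'
  have := hb hii'
  have := hJ i'
  have := hK i
  simp only [transfer, Function.update_apply]
  split_ifs <;> subst_vars <;> omega

lemma DominanceLE.transfer {J K : Fin d} (hab : DominanceLE a b) (h : b K + 2 ≤ b J)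
    (hlt : ∀ m, J ≤ m → m < K → ∑ i ∈ Iic m, a i < ∑ i ∈ Iic m, b i) :
    DominanceLE a (transfer b J K) := by
  intro m
  have hm := sum_transfer_add_ite h (Iic m)
  have := hab m
  have := hlt m
  simp only [mem_Iic] at hm
  split_ifs at hm <;> omega

lemma exists_transfer_of_dominanceLE (ha : Antitone a) (hb : Antitone b)
    (hsum : ∑ i, a i = ∑ i, b i) (hab : DominanceLE a b) (hne : a ≠ b) :
    ∃ J K, b K + 2 ≤ b J ∧ a J < b J ∧ b K < a K ∧
      Antitone (transfer b J K) ∧ DominanceLE a (transfer b J K) := by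
  obtain ⟨j, hj, hjeq⟩ := hab.exists_first_lt hne
  obtain ⟨k, hk, hkle⟩ := exists_first_gt hsum hj
  have hjk : j < k := by
    rcases lt_trichotomy j k with h | rfl | h
    · exact h
    · omega
    · have := hjeq k h
      omega
  obtain ⟨J, hjJ, hJ, hJlast⟩ := exists_last_eq b j
  obtain ⟨K, hKk, hK, hKfirst⟩ := exists_first_eq b k
  have h2 : b K + 2 ≤ b J := by
    have := ha hjk.le
    omega
  have hJK : J < K := lt_of_not_ge fun h => by
    have := hb h
    omega
  refine ⟨J, K, h2, by have := ha hjJ; omega, by have := ha hKk; omega,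
    antitone_transfer hb h2 (fun i hi => (hb hi.le).lt_of_ne (hJ ▸ hJlast i hi))
      (fun i hi => (hb hi.le).lt_of_ne' (hK ▸ hKfirst i hi)),
    hab.transfer h2 fun m hJm hmK => ?_⟩
  exact sum_lt_sum (fun i hi => hkle i ((mem_Iic.1 hi).trans_lt (hmK.trans_le hKk)))
    ⟨j, mem_Iic.2 (hjJ.trans hJm), hj⟩

theorem reflTransGen_isTransferOf_of_dominanceLE (ha : Antitone a) (hb : Antitone b)
    (hsum : ∑ i, a i = ∑ i, b i) (hab : DominanceLE a b) : ReflTransGen IsTransferOf a b := by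
  induction hn : ∑ i, (b i - a i) using Nat.strong_induction_on generalizing b with
  | _ n ih =>
  by_cases hne : a = b
  · exact hne ▸ .refl
  obtain ⟨J, K, h2, hJ, hK, hμ, hdom⟩ := exists_transfer_of_dominanceLE ha hb hsum hab hne
  have hμsum : ∑ i, transfer b J K i = ∑ i, b i := IsTransferOf.sum_eq ⟨J, K, h2, rfl⟩
  refine .tail (ih _ ?_ hμ (hsum.trans hμsum.symm) hdom rfl) ⟨J, K, h2, rfl⟩
  rw [← hn]
  refine sum_lt_sum (fun i _ => ?_) ⟨J, mem_univ J, ?_⟩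
  · simp only [transfer, Function.update_apply]
    split_ifs <;> subst_vars <;> omega
  · rw [transfer_apply_left h2]
    omega

end Dominance

section SymmetricSum

variable {ι α : Type*} [Fintype ι] [Fintype α]

lemma exists_perm_forall_ne_zero (e : ι ↪ α) {b : ι → ℕ} {x : α → ℝ}
    (h : #{i | b i ≠ 0} ≤ #{u | x u ≠ 0}) :
    ∃ τ : Perm α, ∀ i, b i ≠ 0 → x (τ (e i)) ≠ 0 := by
  obtain ⟨f⟩ : Nonempty ({i // b i ≠ 0} ↪ {u // x u ≠ 0}) :=
    Function.Embedding.nonempty_of_card_le (by simpa [Fintype.card_subtype] using h)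
  obtain ⟨τ, hτ⟩ :=
    Perm.exists_extending_pair (fun i : {i // b i ≠ 0} => e i) (fun i => f i)
    (e.injective.comp Subtype.val_injective) (Subtype.val_injective.comp f.injective)
  exact ⟨τ, fun i hi => hτ ⟨i, hi⟩ ▸ (f ⟨i, hi⟩).2⟩

variable [DecidableEq α]

def symmetricSum (e : ι ↪ α) (b : ι → ℕ) (x : α → ℝ) : ℝ :=
  ∑ τ : Perm α, ∏ i, x (τ (e i)) ^ b i

variable (e : ι ↪ α) {a b : ι → ℕ} {x : α → ℝ}

lemma symmetricSum_nonneg (hx : ∀ u, 0 ≤ x u) : 0 ≤ symmetricSum e b x :=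
  sum_nonneg fun _ _ => prod_nonneg fun _ _ => pow_nonneg (hx _) _

lemma symmetricSum_pos (hx : ∀ u, 0 ≤ x u) (h : #{i | b i ≠ 0} ≤ #{u | x u ≠ 0}) :
    0 < symmetricSum e b x := by
  obtain ⟨τ, hτ⟩ := exists_perm_forall_ne_zero e h
  exact sum_pos' (fun _ _ => prod_nonneg fun _ _ => pow_nonneg (hx _) _)
    ⟨τ, mem_univ τ, prod_pow_pos (fun _ => hx _) fun i _ => hτ i⟩

lemma symmetricSum_eq_zero (h : #{u | x u ≠ 0} < #{i | b i ≠ 0}) : symmetricSum e b x = 0 := by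
  refine sum_eq_zero fun τ _ => ?_
  obtain ⟨i, hbi, hxi⟩ : ∃ i, b i ≠ 0 ∧ x (τ (e i)) = 0 := by
    by_contra! hne
    refine h.not_ge (card_le_card_of_injOn (fun i => τ (e i)) (fun i hi => ?_)
      (τ.injective.comp e.injective).injOn)
    simpa using hne i (by simpa using hi)
  exact prod_eq_zero (mem_univ i) (by rw [hxi, zero_pow hbi])

lemma symmetricSum_eq_of_forall_eq (hx : ∀ u v, x u = x v) (hsum : ∑ i, a i = ∑ i, b i) :
    symmetricSum e a x = symmetricSum e b x := by
  rcases isEmpty_or_nonempty α with hα | ⟨⟨u⟩⟩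
  · have := Function.isEmpty e
    simp [symmetricSum]
  · simp only [symmetricSum, fun v => hx v u, prod_pow_eq_pow_sum, hsum]

lemma symmetricSum_eq_of_support_eq {c : ℝ} (hc : ∀ u, x u ≠ 0 → x u = c)
    (hsum : ∑ i, a i = ∑ i, b i) (hsupp : ∀ i, a i = 0 ↔ b i = 0) :
    symmetricSum e a x = symmetricSum e b x :=
  sum_congr rfl fun τ _ => by simp only [prod_pow_eq_ite fun _ => hc _, ne_eq, hsupp, hsum]

lemma symmetricSum_lt_of_support_ssubset {c : ℝ} (hc : ∀ u, x u ≠ 0 → x u = c)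
    (hc₀ : 0 < c) (hzero : ∃ z, x z = 0) (hsum : ∑ i, a i = ∑ i, b i)
    (hsub : ∀ i, b i ≠ 0 → a i ≠ 0) {i₀ : ι} (ha₀ : a i₀ ≠ 0) (hb₀ : b i₀ = 0)
    (hcard : #{i | b i ≠ 0} ≤ #{u | x u ≠ 0}) :
    symmetricSum e a x < symmetricSum e b x := by
  obtain ⟨z, hz⟩ := hzero
  obtain ⟨τ, hτ⟩ := exists_perm_forall_ne_zero e hcard
  -- Send `i₀`, which is in the support of `a` only, to a vanishing variable.
  set τ' := swap (τ (e i₀)) z * τ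
  have hτ'₀ : τ' (e i₀) = z := by simp [τ']
  have hτ' : ∀ i, b i ≠ 0 → x (τ' (e i)) ≠ 0 := fun i hi => by
    have hne : τ (e i) ≠ τ (e i₀) :=
      τ.injective.ne (e.injective.ne (by rintro rfl; exact hi hb₀))
    have hnz : τ (e i) ≠ z := fun h => hτ i hi (h ▸ hz)
    simpa [τ', swap_apply_of_ne_of_ne hne hnz] using hτ i hi
  refine sum_lt_sum (fun σ _ => ?_) ⟨τ', mem_univ _, ?_⟩
  · simp only [prod_pow_eq_ite fun _ => hc _, hsum]
    split_ifs with hσa hσb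
    · exact le_rfl
    · exact absurd (fun i hi => hσa i (hsub i hi)) hσb
    · exact pow_nonneg hc₀.le _
    · exact le_rfl
  · rw [prod_pow_eq_ite fun _ => hc _, prod_pow_eq_ite fun _ => hc _, if_pos hτ',
      if_neg fun h => h i₀ ha₀ (hτ'₀ ▸ hz)]
    exact pow_pos hc₀ _

variable [DecidableEq ι]

lemma two_mul_symmetricSum_sub_transfer {J K : ι} (h : b K + 2 ≤ b J) :
    2 * (symmetricSum e b x - symmetricSum e (transfer b J K) x) =
      ∑ τ : Perm α, transferGap (fun i => x (τ (e i))) b J K := by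
  have hpair : ∀ c : ι → ℕ, 2 * symmetricSum e c x =
      ∑ τ : Perm α, (∏ i, x (τ (e i)) ^ c i + ∏ i, x (τ (e (swap J K i))) ^ c i) := by
    intro c
    have hswap : symmetricSum e c x = ∑ τ : Perm α, ∏ i, x (τ (e (swap J K i))) ^ c i :=
      Fintype.sum_equiv (Equiv.mulRight (swap (e J) (e K))) _ _ fun τ => by
        simp only [coe_mulRight, Perm.mul_apply, Function.Embedding.swap_apply, swap_apply_self]
    rw [sum_add_distrib, ← hswap, two_mul]
    rfl
  rw [mul_sub, hpair, hpair, ← sum_sub_distrib]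
  exact sum_congr rfl fun τ _ => prod_pow_add_swap_sub_transfer _ h

lemma symmetricSum_transfer_le (hx : ∀ u, 0 ≤ x u) {J K : ι} (h : b K + 2 ≤ b J) :
    symmetricSum e (transfer b J K) x ≤ symmetricSum e b x := by
  have hgap := two_mul_symmetricSum_sub_transfer e h (x := x)
  have : 0 ≤ ∑ τ : Perm α, transferGap (fun i => x (τ (e i))) b J K :=
    sum_nonneg fun τ _ => transferGap_nonneg fun _ => hx _
  linarith

lemma symmetricSum_le_of_reflTransGen (hx : ∀ u, 0 ≤ x u) (h : ReflTransGen IsTransferOf a b) :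
    symmetricSum e a x ≤ symmetricSum e b x := by
  induction h with
  | refl => exact le_rfl
  | tail _ hcb ih =>
    obtain ⟨J, K, hJK, rfl⟩ := hcb
    exact ih.trans (symmetricSum_transfer_le e hx hJK)

lemma exists_const_of_symmetricSum_transfer_eq (hx : ∀ u, 0 ≤ x u) {J K : ι}
    (h : b K + 2 ≤ b J)
    (hcard : #{i | transfer b J K i ≠ 0} ≤ #{u | x u ≠ 0})
    (heq : symmetricSum e (transfer b J K) x = symmetricSum e b x) :
    ∃ c, ∀ u, x u ≠ 0 → x u = c := by
  have hgap : ∀ τ : Perm α, transferGap (fun i => x (τ (e i))) b J K = 0 := by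
    have hsum := two_mul_symmetricSum_sub_transfer e h (x := x)
    rw [heq, sub_self, mul_zero, eq_comm,
      sum_eq_zero_iff_of_nonneg fun τ _ => transferGap_nonneg fun _ => hx _] at hsum
    exact fun τ => hsum τ (mem_univ τ)
  obtain ⟨τ, hτ⟩ := exists_perm_forall_ne_zero e hcard
  set p := τ (e J)
  have hp : x p ≠ 0 := hτ J (by rw [transfer_apply_left h]; omega)
  refine ⟨x (τ (e K)), fun u hu => ?_⟩
  -- Composing `τ` with a swap of two nonzero variables moves `x u` to `e J` and keeps the
  -- support of `transfer b J K` on nonzero variables.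
  have hadm : ∀ i, transfer b J K i ≠ 0 → x ((swap p u * τ) (e i)) ≠ 0 := fun i hi => by
    rw [Perm.mul_apply, swap_apply_def]
    split_ifs <;> simp_all
  have hJK := eq_of_transferGap_eq_zero h (fun _ => hx _) hadm (hgap (swap p u * τ))
  rw [Perm.mul_apply, Perm.mul_apply, swap_apply_left] at hJK
  rcases eq_or_ne (τ (e K)) u with hKu | hKu
  · rw [hKu]
  · have hKJ : τ (e K) ≠ p := τ.injective.ne (e.injective.ne (ne_of_add_two_le h).symm)
    rwa [swap_apply_of_ne_of_ne hKJ hKu] at hJK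

lemma exists_const_of_symmetricSum_eq (hx : ∀ u, 0 ≤ x u) (hab : ReflTransGen IsTransferOf a b)
    (hne : a ≠ b) (hcard : #{i | b i ≠ 0} ≤ #{u | x u ≠ 0})
    (heq : symmetricSum e a x = symmetricSum e b x) : ∃ c, ∀ u, x u ≠ 0 → x u = c := by
  obtain rfl | ⟨μ, haμ, J, K, h, rfl⟩ := hab.cases_tail
  · exact absurd rfl hne
  have hμ : symmetricSum e (transfer b J K) x = symmetricSum e b x :=
    (symmetricSum_transfer_le e hx h).antisymm (heq ▸ symmetricSum_le_of_reflTransGen e hx haμ)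
  refine exists_const_of_symmetricSum_transfer_eq e hx h (not_lt.1 fun hlt => ?_) hμ
  have := symmetricSum_pos e hx hcard
  rw [← hμ, symmetricSum_eq_zero e hlt] at this
  exact lt_irrefl _ this

theorem card_support_eq_and_exists_const_of_symmetricSum_eq (hx : ∀ u, 0 ≤ x u)
    (hab : ReflTransGen IsTransferOf a b) (hne : a ≠ b) (hnc : ¬ ∀ u v, x u = x v)
    (hcard : #{i | b i ≠ 0} ≤ #{u | x u ≠ 0})
    (heq : symmetricSum e a x = symmetricSum e b x) :
    #{i | a i ≠ 0} = #{i | b i ≠ 0} ∧ ∃ c, ∀ u, x u ≠ 0 → x u = c := by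
  obtain ⟨c, hc⟩ := exists_const_of_symmetricSum_eq e hx hab hne hcard heq
  refine ⟨congrArg card (filter_congr fun i _ => ?_), c, hc⟩
  obtain ⟨z, hz⟩ : ∃ z, x z = 0 := by
    by_contra! h
    exact hnc fun u v => (hc u (h u)).trans (hc v (h v)).symm
  obtain ⟨u, hu⟩ : ∃ u, x u ≠ 0 := by
    by_contra! h
    exact hnc fun u v => (h u).trans (h v).symm
  have hc₀ : 0 < c := hc u hu ▸ (hx u).lt_of_ne' hu
  refine ⟨fun ha hb => ?_, support_subset_of_reflTransGen hab i⟩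
  exact (symmetricSum_lt_of_support_ssubset e hc hc₀ ⟨z, hz⟩ (sum_eq_of_reflTransGen hab)
    (support_subset_of_reflTransGen hab) ha hb hcard).ne heq

theorem symmetricSum_eq_of_card_support_eq {c : ℝ} (hc : ∀ u, x u ≠ 0 → x u = c)
    (hab : ReflTransGen IsTransferOf a b) (hcard : #{i | a i ≠ 0} = #{i | b i ≠ 0}) :
    symmetricSum e a x = symmetricSum e b x := by
  have hsupp := eq_of_subset_of_card_le
    (fun i => by simpa using support_subset_of_reflTransGen hab i) hcard.le
  refine symmetricSum_eq_of_support_eq e hc (sum_eq_of_reflTransGen hab) fun i => ?_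
  simpa using (Finset.ext_iff.1 hsupp i).not.symm

end SymmetricSum

lemma symSum_eq_symmetricSum {d q : ℕ} (hdq : d ≤ q) (ℓ : Fin d → Fin (d + 1))
    (x : Fin q → ℝ) :
    symSum d q ℓ x = symmetricSum (Fin.castLEEmb hdq) (fun i => (ℓ i : ℕ)) x :=
  sum_congr rfl fun _ _ => prod_congr rfl fun i _ => dif_pos (i.2.trans_le hdq)

lemma antitone_and_sum_of_mem_Pd {d : ℕ} {ℓ : Fin d → Fin (d + 1)} (hℓ : ℓ ∈ Pd d) :
    Antitone (fun i => (ℓ i : ℕ)) ∧ ∑ i, (ℓ i : ℕ) = d := by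
  simp only [Pd, mem_filter, mem_univ, true_and] at hℓ
  exact ⟨fun i j hij => hℓ.1 i j hij, hℓ.2⟩

lemma dominanceLE_of_domLE {d : ℕ} {ℓ ℓ' : Fin d → Fin (d + 1)} (h : domLE ℓ ℓ') :
    DominanceLE (fun i => (ℓ i : ℕ)) (fun i => (ℓ' i : ℕ)) := fun k => by
  simpa [filter_ge_eq_Iic] using h k

open scoped Classical in
theorem muirhead_with_equality_cases
    {d q : ℕ} (hdq : d ≤ q) (x : Fin q → ℝ) (hx : ∀ i, 0 ≤ x i)
    (ℓ ℓ' : Fin d → Fin (d + 1)) (hℓ : ℓ ∈ Pd d) (hℓ' : ℓ' ∈ Pd d)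
    (hdom : domLE ℓ ℓ') :
    symSum d q ℓ x ≤ symSum d q ℓ' x ∧
    (symSum d q ℓ x = symSum d q ℓ' x ↔
      ℓ = ℓ' ∨
      (∀ i j, x i = x j) ∨
      (q - rho ℓ' + 1 ≤ (univ.filter fun i => x i = 0).card) ∨
      (rho ℓ = rho ℓ' ∧ (univ.filter fun i => x i = 0).card ≤ q - rho ℓ' ∧
        ∃ c : ℝ, ∀ i, x i ≠ 0 → x i = c)) := by
  obtain ⟨ha, hsa⟩ := antitone_and_sum_of_mem_Pd hℓ
  obtain ⟨hb, hsb⟩ := antitone_and_sum_of_mem_Pd hℓ'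
  have hchain := reflTransGen_isTransferOf_of_dominanceLE ha hb (hsa.trans hsb.symm)
    (dominanceLE_of_domLE hdom)
  have hq : #{i | x i = 0} + #{i | x i ≠ 0} = q := by
    simpa using card_filter_add_card_filter_not (s := univ) fun i => x i = 0
  have hρ : rho ℓ' ≤ d := (card_filter_le _ _).trans (by simp)
  rw [symSum_eq_symmetricSum hdq, symSum_eq_symmetricSum hdq]
  refine ⟨symmetricSum_le_of_reflTransGen _ hx hchain, fun heq => ?_, ?_⟩
  · refine or_iff_not_imp_left.2 fun hne => or_iff_not_imp_left.2 fun hnc =>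
      or_iff_not_imp_left.2 fun hz => ?_
    have hne' : (fun i => (ℓ i : ℕ)) ≠ fun i => (ℓ' i : ℕ) :=
      fun h => hne (funext fun i => Fin.ext (congrFun h i))
    obtain ⟨hcard, hc⟩ := card_support_eq_and_exists_const_of_symmetricSum_eq _ hx hchain hne'
      hnc (by unfold rho at *; omega) heq
    exact ⟨hcard, by omega, hc⟩
  · rintro (rfl | hnc | hz | ⟨hρeq, -, c, hc⟩)
    · rfl
    · exact symmetricSum_eq_of_forall_eq _ hnc (hsa.trans hsb.symm)
    · refine (symmetricSum_le_of_reflTransGen _ hx hchain).antisymm ?_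
      rw [symmetricSum_eq_zero _ (by unfold rho at *; omega)]
      exact symmetricSum_nonneg _ hx
    · exact symmetricSum_eq_of_card_support_eq _ hc hchain hρeq
end

section
/- (Strassen's theorem.) Let A and B be disjoint finite sets, let w : A ∪ B → [0,∞) be a weight function with Σ_{a∈A} w(a) = Σ_{b∈B} w(b), and let E ⊆ A × B be a set of edges. Then the following are equivalent: (i) for every U ⊆ A, Σ_{a∈U} w(a) ≤ Σ_{b∈N(U)} w(b), where N(U) = {b ∈ B : (a,b) ∈ E for some a ∈ U}; (ii) there exists τ : A × B → [0,∞) with τ(a,b) = 0 whenever (a,b) ∉ E, such that Σ_{b∈B} τ(a,b) = w(a) for every a ∈ A and Σ_{a∈A} τ(a,b) = w(b) for every b ∈ B. -/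
/-
Induct on the number of edges. Given Hall's condition for `E ∪ {(a₀, b₀)}`, put on the edge
`(a₀, b₀)` the mass `t = max(0, max_{U ∋ a₀} (w(U) - w(N_E(U))))` and subtract it from the weights
of `a₀` and `b₀`. Hall's condition then holds for `E` with the reduced weights: for sets containing
`a₀` this is the choice of `t`, and for a set `V ∌ a₀` with `b₀ ∈ N_E(V)` it is the submodularity
of `U ↦ w(N(U))`, applied to `U ∪ V` and `U ∩ V`. The converse is double counting.
-/

open Finset

namespace FractionalMatching

theorem sum_insert_le_add {γ : Type*} [DecidableEq γ] {w : γ → ℝ} (hw : ∀ c, 0 ≤ w c)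
    (c : γ) (s : Finset γ) : ∑ x ∈ insert c s, w x ≤ w c + ∑ x ∈ s, w x := by
  by_cases hc : c ∈ s
  · rw [insert_eq_of_mem hc]
    linarith [hw c]
  · rw [sum_insert hc]

theorem sum_sub_single {γ : Type*} [DecidableEq γ] (w : γ → ℝ) (c : γ) (t : ℝ)
    (s : Finset γ) :
    ∑ x ∈ s, (w - Pi.single c t : γ → ℝ) x = ∑ x ∈ s, w x - if c ∈ s then t else 0 := by
  simp only [Pi.sub_apply, sum_sub_distrib, sum_pi_single']

theorem sub_single_nonneg {γ : Type*} [DecidableEq γ] {w : γ → ℝ} (hw : ∀ c, 0 ≤ w c)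
    {c : γ} {t : ℝ} (ht : t ≤ w c) (x : γ) : 0 ≤ (w - Pi.single c t : γ → ℝ) x := by
  rcases eq_or_ne x c with rfl | hx
  · simp [ht]
  · simp [hx, hw x]

theorem sum_single_prod_left {α β : Type*} [Fintype β] [DecidableEq α] [DecidableEq β]
    (a₀ a : α) (b₀ : β) (t : ℝ) :
    ∑ b, (Pi.single (a₀, b₀) t : α × β → ℝ) (a, b) = (Pi.single a₀ t : α → ℝ) a := by
  simp [Pi.single_apply, Prod.ext_iff, ite_and]

theorem sum_single_prod_right {α β : Type*} [Fintype α] [DecidableEq α] [DecidableEq β]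
    (a₀ : α) (b₀ b : β) (t : ℝ) :
    ∑ a, (Pi.single (a₀, b₀) t : α × β → ℝ) (a, b) = (Pi.single b₀ t : β → ℝ) b := by
  simp [Pi.single_apply, Prod.ext_iff, ite_and]

variable {α β : Type*} [Fintype β] [DecidableEq α] [DecidableEq β]

def neighbors (E : Finset (α × β)) (U : Finset α) : Finset β :=
  univ.filter fun b => ∃ a ∈ U, (a, b) ∈ E

def HallCondition (E : Finset (α × β)) (wA : α → ℝ) (wB : β → ℝ) : Prop :=
  ∀ U : Finset α, ∑ a ∈ U, wA a ≤ ∑ b ∈ neighbors E U, wB b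

def IsFractionalMatching [Fintype α] (E : Finset (α × β)) (wA : α → ℝ) (wB : β → ℝ)
    (τ : α × β → ℝ) : Prop :=
  (∀ e, 0 ≤ τ e) ∧ (∀ e, e ∉ E → τ e = 0) ∧
    (∀ a, ∑ b, τ (a, b) = wA a) ∧ (∀ b, ∑ a, τ (a, b) = wB b)

def deficiency (E : Finset (α × β)) (wA : α → ℝ) (wB : β → ℝ) (U : Finset α) : ℝ :=
  ∑ a ∈ U, wA a - ∑ b ∈ neighbors E U, wB b

section neighbors

variable {E : Finset (α × β)} {U V : Finset α}

@[simp]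
theorem mem_neighbors {b : β} : b ∈ neighbors E U ↔ ∃ a ∈ U, (a, b) ∈ E := by
  simp [neighbors]

theorem neighbors_mono (h : U ⊆ V) : neighbors E U ⊆ neighbors E V := by
  intro b
  simp only [mem_neighbors]
  exact fun ⟨a, ha, hab⟩ => ⟨a, h ha, hab⟩

theorem neighbors_union : neighbors E (U ∪ V) = neighbors E U ∪ neighbors E V := by
  ext b
  simp only [mem_neighbors, mem_union, or_and_right, exists_or]

theorem neighbors_inter_subset : neighbors E (U ∩ V) ⊆ neighbors E U ∩ neighbors E V :=
  subset_inter (neighbors_mono inter_subset_left) (neighbors_mono inter_subset_right)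

theorem neighbors_insert (a₀ : α) (b₀ : β) :
    neighbors (insert (a₀, b₀) E) U =
      if a₀ ∈ U then insert b₀ (neighbors E U) else neighbors E U := by
  ext b
  split_ifs with h <;> simp only [mem_neighbors, mem_insert, Prod.mk.injEq] <;> aesop

theorem neighbors_insert_of_notMem {a₀ : α} (b₀ : β) (h : a₀ ∉ U) :
    neighbors (insert (a₀, b₀) E) U = neighbors E U := by
  rw [neighbors_insert, if_neg h]

theorem neighbors_insert_of_mem_neighbors (a₀ : α) {b₀ : β} (h : b₀ ∈ neighbors E U) :
    neighbors (insert (a₀, b₀) E) U = neighbors E U := by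
  rw [neighbors_insert, insert_eq_of_mem h, ite_self]

end neighbors

theorem IsFractionalMatching.hallCondition [Fintype α] {E : Finset (α × β)} {wA : α → ℝ}
    {wB : β → ℝ} {τ : α × β → ℝ} (hτ : IsFractionalMatching E wA wB τ) : HallCondition E wA wB := by
  obtain ⟨hτ_nonneg, hτ_supp, hτ_row, hτ_col⟩ := hτ
  intro U
  have hrow : ∀ a ∈ U, wA a = ∑ b ∈ neighbors E U, τ (a, b) := by
    intro a ha
    rw [← hτ_row a]
    refine (sum_subset (subset_univ _) fun b _ hb => hτ_supp _ fun hab => hb ?_).symm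
    exact mem_neighbors.2 ⟨a, ha, hab⟩
  calc ∑ a ∈ U, wA a = ∑ b ∈ neighbors E U, ∑ a ∈ U, τ (a, b) := by
        rw [sum_congr rfl hrow, sum_comm]
    _ ≤ ∑ b ∈ neighbors E U, wB b := by
        refine sum_le_sum fun b _ => ?_
        rw [← hτ_col b]
        exact sum_le_sum_of_subset_of_nonneg (subset_univ _) fun a _ _ => hτ_nonneg _

section insertEdge

variable {E : Finset (α × β)} {wA : α → ℝ} {wB : β → ℝ} {a₀ : α} {b₀ : β} {U V : Finset α}

theorem deficiency_le_left (hwB : ∀ b, 0 ≤ wB b) (hall : HallCondition (insert (a₀, b₀) E) wA wB)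
    (hU : a₀ ∈ U) : deficiency E wA wB U ≤ wA a₀ := by
  have hall_erase := hall (U.erase a₀)
  rw [neighbors_insert_of_notMem b₀ (notMem_erase a₀ U)] at hall_erase
  have hmono : ∑ b ∈ neighbors E (U.erase a₀), wB b ≤ ∑ b ∈ neighbors E U, wB b :=
    sum_le_sum_of_subset_of_nonneg (neighbors_mono (erase_subset a₀ U)) fun b _ _ => hwB b
  have hsplit := sum_erase_add U wA hU
  unfold deficiency
  linarith

theorem deficiency_le_right (hwB : ∀ b, 0 ≤ wB b) (hall : HallCondition (insert (a₀, b₀) E) wA wB)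
    (hU : a₀ ∈ U) : deficiency E wA wB U ≤ wB b₀ := by
  have hall_U := hall U
  rw [neighbors_insert, if_pos hU] at hall_U
  have hinsert := sum_insert_le_add hwB b₀ (neighbors E U)
  unfold deficiency
  linarith

theorem deficiency_add_deficiency_nonpos (hwB : ∀ b, 0 ≤ wB b)
    (hall : HallCondition (insert (a₀, b₀) E) wA wB) (hV : a₀ ∉ V)
    (hb₀ : b₀ ∈ neighbors E V) : deficiency E wA wB U + deficiency E wA wB V ≤ 0 := by
  have hall_union := hall (U ∪ V)
  rw [neighbors_insert_of_mem_neighbors a₀ (neighbors_mono subset_union_right hb₀),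
    neighbors_union] at hall_union
  have hall_inter := hall (U ∩ V)
  rw [neighbors_insert_of_notMem b₀ fun h => hV (mem_inter.1 h).2] at hall_inter
  have hinter : ∑ b ∈ neighbors E (U ∩ V), wB b ≤ ∑ b ∈ neighbors E U ∩ neighbors E V, wB b :=
    sum_le_sum_of_subset_of_nonneg neighbors_inter_subset fun b _ _ => hwB b
  have hsplitA := sum_union_inter (s₁ := U) (s₂ := V) (f := wA)
  have hsplitB := sum_union_inter (s₁ := neighbors E U) (s₂ := neighbors E V) (f := wB)
  unfold deficiency
  linarith

theorem HallCondition.exists_sub_single [Fintype α] (hwA : ∀ a, 0 ≤ wA a) (hwB : ∀ b, 0 ≤ wB b)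
    (hall : HallCondition (insert (a₀, b₀) E) wA wB) :
    ∃ t, 0 ≤ t ∧ t ≤ wA a₀ ∧ t ≤ wB b₀ ∧
      HallCondition E (wA - Pi.single a₀ t) (wB - Pi.single b₀ t) := by
  obtain ⟨U₀, hU₀, hU₀_max⟩ :=
    exists_max_image (univ.filter (a₀ ∈ ·)) (deficiency E wA wB) ⟨{a₀}, by simp⟩
  replace hU₀ : a₀ ∈ U₀ := (mem_filter.1 hU₀).2
  set t := max 0 (deficiency E wA wB U₀)
  refine ⟨t, le_max_left _ _, max_le (hwA a₀) (deficiency_le_left hwB hall hU₀),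
    max_le (hwB b₀) (deficiency_le_right hwB hall hU₀), fun U => ?_⟩
  have hall_U := hall U
  rw [sum_sub_single, sum_sub_single]
  by_cases ha : a₀ ∈ U <;> by_cases hb : b₀ ∈ neighbors E U <;>
    simp only [ha, hb, if_true, if_false]
  · rw [neighbors_insert_of_mem_neighbors a₀ hb] at hall_U
    linarith
  · have hU_le : deficiency E wA wB U ≤ t :=
      (hU₀_max U (mem_filter.2 ⟨mem_univ U, ha⟩)).trans (le_max_right _ _)
    unfold deficiency at hU_le
    linarith
  · rw [neighbors_insert_of_mem_neighbors a₀ hb] at hall_U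
    have hsum := deficiency_add_deficiency_nonpos (U := U₀) hwB hall ha hb
    have ht : t ≤ -deficiency E wA wB U := max_le (by unfold deficiency; linarith) (by linarith)
    unfold deficiency at ht
    linarith
  · rw [neighbors_insert_of_notMem b₀ ha] at hall_U
    linarith

end insertEdge

variable [Fintype α] {E : Finset (α × β)} {wA : α → ℝ} {wB : β → ℝ}

theorem IsFractionalMatching.add_single {τ : α × β → ℝ} {a₀ : α} {b₀ : β} {t : ℝ} (ht : 0 ≤ t)
    (hτ : IsFractionalMatching E (wA - Pi.single a₀ t) (wB - Pi.single b₀ t) τ) :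
    IsFractionalMatching (insert (a₀, b₀) E) wA wB (τ + Pi.single (a₀, b₀) t) := by
  obtain ⟨hτ_nonneg, hτ_supp, hτ_row, hτ_col⟩ := hτ
  refine ⟨fun e => ?_, fun e he => ?_, fun a => ?_, fun b => ?_⟩
  · exact add_nonneg (hτ_nonneg e) (by simp only [Pi.single_apply]; split_ifs <;> simp [ht])
  · obtain ⟨hne, heE⟩ := not_or.1 (mt mem_insert.2 he)
    simp [hτ_supp e heE, hne]
  · simp only [Pi.add_apply, sum_add_distrib, hτ_row, sum_single_prod_left, Pi.sub_apply,
      sub_add_cancel]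
  · simp only [Pi.add_apply, sum_add_distrib, hτ_col, sum_single_prod_right, Pi.sub_apply,
      sub_add_cancel]

theorem isFractionalMatching_zero_of_hallCondition_empty (hwA : ∀ a, 0 ≤ wA a)
    (hwB : ∀ b, 0 ≤ wB b) (hbal : ∑ a, wA a = ∑ b, wB b) (hall : HallCondition ∅ wA wB) :
    IsFractionalMatching ∅ wA wB 0 := by
  have htotal : ∑ a, wA a = 0 :=
    le_antisymm (by simpa [neighbors] using hall univ) (sum_nonneg fun a _ => hwA a)
  refine ⟨fun _ => le_rfl, fun _ _ => rfl, fun a => ?_, fun b => ?_⟩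
  · simpa using ((sum_eq_zero_iff_of_nonneg fun a _ => hwA a).1 htotal a (mem_univ a)).symm
  · simpa using ((sum_eq_zero_iff_of_nonneg fun b _ => hwB b).1 (hbal ▸ htotal) b (mem_univ b)).symm

theorem HallCondition.exists_isFractionalMatching (hwA : ∀ a, 0 ≤ wA a) (hwB : ∀ b, 0 ≤ wB b)
    (hbal : ∑ a, wA a = ∑ b, wB b) (hall : HallCondition E wA wB) :
    ∃ τ, IsFractionalMatching E wA wB τ := by
  induction E using Finset.induction_on generalizing wA wB with
  | empty => exact ⟨0, isFractionalMatching_zero_of_hallCondition_empty hwA hwB hbal hall⟩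
  | insert e E _ ih =>
    obtain ⟨a₀, b₀⟩ := e
    obtain ⟨t, ht, hta, htb, hall'⟩ := hall.exists_sub_single hwA hwB
    have hbal' : ∑ a, (wA - Pi.single a₀ t : α → ℝ) a = ∑ b, (wB - Pi.single b₀ t : β → ℝ) b := by
      simp only [sum_sub_single, hbal, mem_univ, if_true]
    obtain ⟨τ, hτ⟩ := ih (sub_single_nonneg hwA hta) (sub_single_nonneg hwB htb) hbal' hall'
    exact ⟨_, hτ.add_single ht⟩

end FractionalMatching

theorem strassen_fractional_matching
    {A B : Type} [Fintype A] [Fintype B] [DecidableEq A] [DecidableEq B]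
    (w : A ⊕ B → ℝ) (hw : ∀ v, 0 ≤ w v)
    (hbal : ∑ a : A, w (Sum.inl a) = ∑ b : B, w (Sum.inr b))
    (E : Finset (A × B)) :
    (∀ U : Finset A,
      ∑ a ∈ U, w (Sum.inl a) ≤
        ∑ b ∈ univ.filter fun b => ∃ a ∈ U, (a, b) ∈ E, w (Sum.inr b)) ↔
    (∃ τ : A × B → ℝ, (∀ e, 0 ≤ τ e) ∧ (∀ e, e ∉ E → τ e = 0) ∧
      (∀ a : A, ∑ b : B, τ (a, b) = w (Sum.inl a)) ∧
      (∀ b : B, ∑ a : A, τ (a, b) = w (Sum.inr b))) :=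
  ⟨fun hall => FractionalMatching.HallCondition.exists_isFractionalMatching
      (fun a => hw (Sum.inl a)) (fun b => hw (Sum.inr b)) hbal hall,
    fun ⟨_, hτ⟩ => FractionalMatching.IsFractionalMatching.hallCondition hτ⟩
end

section
/- Let d ≥ 2 and q ≥ d be integers and let ω : P_d → ℝ satisfy Σ_{ℓ∈P_d} ω_ℓ = 0. Set N = {ℓ ∈ P_d : ω_ℓ < 0} and P = {ℓ ∈ P_d : ω_ℓ ≥ 0}, and suppose that for every subset U ⊆ N one has Σ_{n∈U} (−ω_n) ≤ Σ { ω_p : p ∈ P and n ≤ p for some n ∈ U }. Then Σ_{ℓ∈P_d} ω_ℓ · Σ_ℓ(x) ≥ 0 for all nonnegative reals x₁,…,x_q. Moreover, if N ≠ ∅ and ω_{(d,0,…,0)} > 0, then equality holds if and only if x₁ = x₂ = … = x_q. -/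
open Finset

/-!
Muirhead's inequality gives `Σ_n(x) ≤ Σ_p(x)` whenever `n ≤ p` in dominance order: move one unit
of exponent at a time from a larger to a smaller part of `p` (a Robin Hood transfer) until `n` is
reached; pairing each `τ` with `τ ∘ (i j)` shows that a transfer does not increase the sum, because
`u^(α-1) v^(β+1) + v^(α-1) u^(β+1) ≤ u^α v^β + v^α u^β` for `β < α`.

The Hall condition says that the negative weights can be fractionally matched to nonnegative
weights of partitions dominating them. Slicing the values `Σ_n(x)`, `n ∈ N`, into layers
(layer-cake), each layer is paid for by the Hall inequality, and Muirhead guarantees the matched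
partners carry at least the same value; this gives positivity.

If `x` is not constant, then `Σ_ℓ(x) ≤ Σ_{(d-1,1)}(x) < Σ_{(d)}(x)` for every `ℓ ≠ (d)`, so the
value at `(d)` exceeds every value on `N` and the sum is strictly positive. For constant `x` all
`Σ_ℓ(x)` coincide and `Σ ω_ℓ = 0`.
-/

open Equiv

lemma sub_mul_pow_sub_pow_nonneg {u v : ℝ} (hu : 0 ≤ u) (hv : 0 ≤ v) (m : ℕ) :
    0 ≤ (u - v) * (u ^ m - v ^ m) := by
  rcases le_total u v with huv | huv
  · exact mul_nonneg_of_nonpos_of_nonpos (by linarith) (by linarith [pow_le_pow_left₀ hu huv m])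
  · exact mul_nonneg (by linarith) (by linarith [pow_le_pow_left₀ hv huv m])

lemma sub_mul_pow_sub_pow_pos {u v : ℝ} (hu : 0 ≤ u) (hv : 0 ≤ v) (huv : u ≠ v) {m : ℕ}
    (hm : m ≠ 0) : 0 < (u - v) * (u ^ m - v ^ m) := by
  rcases huv.lt_or_gt with huv | huv
  · exact mul_pos_of_neg_of_neg (by linarith) (by linarith [pow_lt_pow_left₀ huv hu hm])
  · exact mul_pos (by linarith) (by linarith [pow_lt_pow_left₀ huv hv hm])

lemma pow_pred_mul_pow_succ_add_le {u v : ℝ} (hu : 0 ≤ u) (hv : 0 ≤ v) {α β : ℕ} (h : β < α) :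
    u ^ (α - 1) * v ^ (β + 1) + v ^ (α - 1) * u ^ (β + 1) ≤ u ^ α * v ^ β + v ^ α * u ^ β := by
  obtain ⟨m, rfl⟩ : ∃ m, α = β + m + 1 := ⟨α - β - 1, by omega⟩
  have key := mul_nonneg (pow_nonneg (mul_nonneg hu hv) β) (sub_mul_pow_sub_pow_nonneg hu hv m)
  rw [Nat.add_sub_cancel]
  linear_combination key

lemma pow_succ_mul_add_lt {u v : ℝ} (hu : 0 ≤ u) (hv : 0 ≤ v) (huv : u ≠ v) (m : ℕ) :
    u ^ (m + 1) * v + v ^ (m + 1) * u < u ^ (m + 2) + v ^ (m + 2) := by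
  linear_combination sub_mul_pow_sub_pow_pos hu hv huv m.add_one_ne_zero

lemma exists_perm_apply_eq_apply_eq {α : Type*} [DecidableEq α] {a b c e : α} (hab : a ≠ b)
    (hce : c ≠ e) : ∃ τ : Perm α, τ c = a ∧ τ e = b := by
  set σ := swap c a
  have hσe : σ e ≠ a := fun h => hce (σ.injective (h.trans (swap_apply_left c a).symm)).symm
  refine ⟨swap (σ e) b * σ, ?_, by simp⟩
  simp [σ, swap_apply_of_ne_of_ne (Ne.symm hσe) hab]

section UnitTransfer

variable {ι : Type*} [DecidableEq ι]

def unitTransfer (e : ι → ℕ) (i j : ι) : ι → ℕ :=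
  Function.update (Function.update e i (e i - 1)) j (e j + 1)

lemma unitTransfer_add_single {e : ι → ℕ} {i j : ι} (hij : i ≠ j) (hi : 0 < e i) :
    unitTransfer e i j + Pi.single i 1 = e + Pi.single j 1 := by
  ext k
  by_cases hki : k = i
  · subst hki; simp [unitTransfer, hij]; omega
  · by_cases hkj : k = j
    · subst hkj; simp [unitTransfer, hki]
    · simp [unitTransfer, hki, hkj]

lemma sum_unitTransfer_add_ite {e : ι → ℕ} {i j : ι} (hij : i ≠ j) (hi : 0 < e i)
    (s : Finset ι) :
    ∑ k ∈ s, unitTransfer e i j k + (if i ∈ s then 1 else 0) =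
      ∑ k ∈ s, e k + (if j ∈ s then 1 else 0) := by
  rw [← sum_pi_single' i, ← sum_pi_single' j, ← sum_add_distrib, ← sum_add_distrib]
  exact sum_congr rfl fun k _ => congrFun (unitTransfer_add_single hij hi) k

variable [Fintype ι]

lemma sum_unitTransfer {e : ι → ℕ} {i j : ι} (hij : i ≠ j) (hi : 0 < e i) :
    ∑ k, unitTransfer e i j k = ∑ k, e k := by
  simpa using sum_unitTransfer_add_ite hij hi univ

lemma prod_eq_mul_mul_prod_compl {M : Type*} [CommMonoid M] (g : ι → M) {i j : ι}
    (hij : i ≠ j) : ∏ k, g k = g i * g j * ∏ k ∈ {i, j}ᶜ, g k := by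
  rw [← prod_pair hij, prod_mul_prod_compl]

lemma prod_pow_unitTransfer_add_le {y : ι → ℝ} (hy : ∀ k, 0 ≤ y k) {e : ι → ℕ} {i j : ι}
    (hij : i ≠ j) (h : e j < e i) :
    ∏ k, y k ^ unitTransfer e i j k + ∏ k, y (swap i j k) ^ unitTransfer e i j k ≤
      ∏ k, y k ^ e k + ∏ k, y (swap i j k) ^ e k := by
  have hrest : ∀ f : ι → ℕ, (∀ k ∈ ({i, j} : Finset ι)ᶜ, f k = e k) →
      ∏ k ∈ {i, j}ᶜ, y (swap i j k) ^ f k = ∏ k ∈ {i, j}ᶜ, y k ^ e k ∧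
      ∏ k ∈ {i, j}ᶜ, y k ^ f k = ∏ k ∈ {i, j}ᶜ, y k ^ e k := by
    intro f hf
    refine ⟨prod_congr rfl fun k hk => ?_, prod_congr rfl fun k hk => by rw [hf k hk]⟩
    simp only [mem_compl, mem_insert, mem_singleton, not_or] at hk
    rw [swap_apply_of_ne_of_ne hk.1 hk.2, hf k (by simp [hk.1, hk.2])]
  have htr : ∀ k ∈ ({i, j} : Finset ι)ᶜ, unitTransfer e i j k = e k := by
    intro k hk
    simp only [mem_compl, mem_insert, mem_singleton, not_or] at hk
    simp [unitTransfer, hk.1, hk.2]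
  simp only [prod_eq_mul_mul_prod_compl _ hij, (hrest _ htr).1, (hrest _ htr).2,
    (hrest e fun _ _ => rfl).1, swap_apply_left, swap_apply_right]
  have hR : 0 ≤ ∏ k ∈ {i, j}ᶜ, y k ^ e k := prod_nonneg fun k _ => pow_nonneg (hy k) _
  have key := pow_pred_mul_pow_succ_add_le (hy i) (hy j) h
  simp only [unitTransfer, Function.update_self, Function.update_of_ne hij]
  nlinarith

end UnitTransfer

section Dominance

variable {d : ℕ}

def prefixSum (e : Fin d → ℕ) (k : Fin d) : ℕ := ∑ i ∈ univ.filter (· ≤ k), e i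

lemma prefixSum_unitTransfer_add_ite {e : Fin d → ℕ} {i j : Fin d} (hij : i ≠ j) (hi : 0 < e i)
    (k : Fin d) :
    prefixSum (unitTransfer e i j) k + (if i ≤ k then 1 else 0) =
      prefixSum e k + (if j ≤ k then 1 else 0) := by
  have h := sum_unitTransfer_add_ite hij hi (univ.filter (· ≤ k))
  simp only [mem_filter, mem_univ, true_and] at h
  exact h

lemma exists_unitTransfer_of_dominated {a b : Fin d → ℕ} (ha : Antitone a)
    (hsum : ∑ k, a k = ∑ k, b k) (hdom : ∀ k, prefixSum a k ≤ prefixSum b k) (hne : a ≠ b) :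
    ∃ i j, a i < b i ∧ b j < a j ∧ b j < b i ∧
      ∀ k, prefixSum a k ≤ prefixSum (unitTransfer b i j) k := by
  obtain ⟨i, hi⟩ := exists_minimal_of_wellFoundedLT (fun i => a i ≠ b i) (Function.ne_iff.mp hne)
  have hbefore : ∀ m < i, a m = b m := fun m hm => not_not.mp ((minimal_iff_forall_lt.mp hi).2 hm)
  have hai : a i < b i := by
    refine lt_of_le_of_ne (not_lt.mp fun hlt => (hdom i).not_gt ?_) hi.1
    refine sum_lt_sum (fun m hm => ?_) ⟨i, by simp, hlt⟩
    rcases (mem_filter.mp hm).2.lt_or_eq with hm | rfl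
    · exact (hbefore m hm).ge
    · exact hlt.le
  have hex : ∃ j, b j < a j := by
    by_contra! hle
    exact hsum.not_lt (sum_lt_sum (fun m _ => hle m) ⟨i, mem_univ _, hai⟩)
  obtain ⟨j, hj⟩ := exists_minimal_of_wellFoundedLT (fun j => b j < a j) hex
  have hupto : ∀ m < j, a m ≤ b m := fun m hm => not_lt.mp ((minimal_iff_forall_lt.mp hj).2 hm)
  have hij : i < j := by
    refine lt_of_le_of_ne (not_lt.mp fun hji => ?_) fun h => ?_
    · exact hj.1.ne (hbefore j hji).symm
    · subst h; exact hai.not_gt hj.1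
  refine ⟨i, j, hai, hj.1, hj.1.trans ((ha hij.le).trans_lt hai), fun k => ?_⟩
  have hk := prefixSum_unitTransfer_add_ite hij.ne (e := b) (by omega) k
  have hdomk := hdom k
  by_cases hik : i ≤ k
  · by_cases hjk : j ≤ k
    · rw [if_pos hik, if_pos hjk] at hk
      omega
    · have hlt : prefixSum a k < prefixSum b k := by
        refine sum_lt_sum (fun m hm => hupto m ?_) ⟨i, by simpa using hik, hai⟩
        exact lt_of_le_of_lt (mem_filter.mp hm).2 (not_le.mp hjk)
      rw [if_pos hik, if_neg hjk] at hk
      omega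
  · have hjk : ¬ j ≤ k := fun hjk => hik (hij.le.trans hjk)
    rw [if_neg hik, if_neg hjk] at hk
    omega

end Dominance

section SymSumExp

variable {d q : ℕ} (hdq : d ≤ q)

noncomputable def symSumExp (e : Fin d → ℕ) (x : Fin q → ℝ) : ℝ :=
  ∑ τ : Perm (Fin q), ∏ i, x (τ (Fin.castLE hdq i)) ^ e i

lemma symSum_eq_symSumExp (ℓ : Fin d → Fin (d + 1)) (x : Fin q → ℝ) :
    symSum d q ℓ x = symSumExp hdq (fun i => ℓ i) x := by
  refine sum_congr rfl fun τ _ => prod_congr rfl fun i _ => ?_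
  rw [dif_pos (i.isLt.trans_le hdq)]
  rfl

variable {hdq} {x : Fin q → ℝ}

lemma symSumExp_const (e : Fin d → ℕ) (c : ℝ) :
    symSumExp hdq e (fun _ => c) = q.factorial * c ^ ∑ i, e i := by
  simp [symSumExp, prod_pow_eq_pow_sum, Fintype.card_perm]

lemma two_mul_symSumExp (e : Fin d → ℕ) (s : Perm (Fin q)) :
    2 * symSumExp hdq e x = ∑ τ : Perm (Fin q),
      (∏ i, x (τ (Fin.castLE hdq i)) ^ e i + ∏ i, x ((τ * s) (Fin.castLE hdq i)) ^ e i) := by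
  rw [two_mul, sum_add_distrib]
  congr 1
  exact (Equiv.sum_comp (Equiv.mulRight s) _).symm

lemma symSumExp_unitTransfer_le (hx : ∀ i, 0 ≤ x i) {e : Fin d → ℕ} {i j : Fin d}
    (hij : i ≠ j) (h : e j < e i) : symSumExp hdq (unitTransfer e i j) x ≤ symSumExp hdq e x := by
  have hι := Fin.castLE_injective hdq
  set s := swap (Fin.castLE hdq i) (Fin.castLE hdq j)
  refine le_of_mul_le_mul_left ?_ two_pos
  rw [two_mul_symSumExp _ s, two_mul_symSumExp _ s]
  refine sum_le_sum fun τ _ => ?_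
  simp only [Perm.mul_apply, s, hι.swap_apply]
  exact prod_pow_unitTransfer_add_le (fun k => hx _) hij h

lemma symSumExp_unitTransfer_single_lt (hx : ∀ i, 0 ≤ x i) {a b : Fin q} (hab : x a ≠ x b)
    {i j : Fin d} (hij : i ≠ j) (m : ℕ) :
    symSumExp hdq (unitTransfer (Pi.single i (m + 2)) i j) x <
      symSumExp hdq (Pi.single i (m + 2)) x := by
  have hι := Fin.castLE_injective hdq
  have hpair : ∀ f : Fin d → ℕ, (∀ k, k ≠ i → k ≠ j → f k = 0) → ∀ y : Fin d → ℝ,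
      ∏ k, y k ^ f k = y i ^ f i * y j ^ f j := by
    intro f hf y
    rw [prod_eq_mul_mul_prod_compl _ hij, prod_eq_one, mul_one]
    intro k hk
    simp only [mem_compl, mem_insert, mem_singleton, not_or] at hk
    rw [hf k hk.1 hk.2, pow_zero]
  have htop := hpair (Pi.single i (m + 2)) fun k hki _ => by simp [hki]
  have hhook := hpair (unitTransfer (Pi.single i (m + 2)) i j) fun k hki hkj => by
    simp [unitTransfer, hki, hkj]
  set s := swap (Fin.castLE hdq i) (Fin.castLE hdq j)
  refine lt_of_mul_lt_mul_left ?_ zero_le_two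
  rw [two_mul_symSumExp _ s, two_mul_symSumExp _ s]
  simp only [htop, hhook, Perm.mul_apply, s, swap_apply_left, swap_apply_right]
  simp only [unitTransfer, Function.update_self, Function.update_of_ne hij, Pi.single_eq_same,
    Pi.single_eq_of_ne hij.symm, show m + 2 - 1 = m + 1 by omega]
  obtain ⟨τ₀, hτ₀i, hτ₀j⟩ :=
    exists_perm_apply_eq_apply_eq (fun h => hab (congrArg x h)) (hι.ne hij)
  refine sum_lt_sum (fun τ _ => ?_) ⟨τ₀, mem_univ _, ?_⟩
  · simpa using pow_pred_mul_pow_succ_add_le (hx _) (hx _) (show 0 < m + 2 by omega)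
  · simpa [hτ₀i, hτ₀j] using pow_succ_mul_add_lt (hx a) (hx b) hab m

theorem symSumExp_le_of_dominated (hx : ∀ i, 0 ≤ x i)
    {a b : Fin d → ℕ} (ha : Antitone a) (hsum : ∑ k, a k = ∑ k, b k)
    (hdom : ∀ k, prefixSum a k ≤ prefixSum b k) : symSumExp hdq a x ≤ symSumExp hdq b x := by
  induction hn : ∑ k, (b k - a k) using Nat.strong_induction_on generalizing b with
  | _ n ih =>
  by_cases hab : a = b
  · rw [hab]
  obtain ⟨i, j, hai, hbj, hji, hdom'⟩ := exists_unitTransfer_of_dominated ha hsum hdom hab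
  have hij : i ≠ j := fun h => by subst h; omega
  -- the transfer moves `b` one unit towards `a` at `i` and does not overshoot at `j`
  have hcloser : ∑ k, (unitTransfer b i j k - a k) < n := by
    refine hn ▸ sum_lt_sum (fun k _ => ?_) ⟨i, mem_univ _, ?_⟩
    · by_cases hki : k = i
      · subst hki; simp [unitTransfer, hij]; omega
      · by_cases hkj : k = j
        · subst hkj; simp [unitTransfer]; omega
        · simp [unitTransfer, hki, hkj]
    · simp [unitTransfer, hij]; omega
  calc symSumExp hdq a x
      ≤ symSumExp hdq (unitTransfer b i j) x :=
        ih _ hcloser (hsum.trans (sum_unitTransfer hij (by omega)).symm) hdom' rfl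
    _ ≤ symSumExp hdq b x := symSumExp_unitTransfer_le hx hij hji

end SymSumExp

section FractionalMatching

variable {α : Type*} (S : Finset α) (r : α → α → Prop) (ω : α → ℝ)

open scoped Classical in
noncomputable def nonnegNbhd (U : Finset α) : Finset α :=
  S.filter fun p => 0 ≤ ω p ∧ ∃ m ∈ U, r m p

variable {S r ω}

open scoped Classical in
lemma sum_neg_mul_le_sum_nonnegNbhd_mul
    (hall : ∀ U ⊆ S.filter (ω · < 0), ∑ m ∈ U, -ω m ≤ ∑ p ∈ nonnegNbhd S r ω U, ω p)
    {U : Finset α} (hU : U ⊆ S.filter (ω · < 0)) {v : α → ℝ} (hv : ∀ n ∈ U, 0 ≤ v n)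
    (hmono : ∀ n ∈ U, ∀ p ∈ S, 0 ≤ ω p → r n p → v n ≤ v p) :
    ∑ m ∈ U, -ω m * v m ≤ ∑ p ∈ nonnegNbhd S r ω U, ω p * v p := by
  induction U using Finset.strongInduction generalizing v with
  | H U ih =>
  rcases U.eq_empty_or_nonempty with rfl | hne
  · simp [nonnegNbhd]
  -- peel off the level `c = min_U v`: at that level the Hall inequality itself is the claim
  obtain ⟨n₀, hn₀, hmin⟩ := U.exists_min_image v hne
  set c := v n₀
  have hc : 0 ≤ c := hv n₀ hn₀
  have hnbhd : ∀ p ∈ nonnegNbhd S r ω U, 0 ≤ ω p ∧ c ≤ v p := by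
    intro p hp
    obtain ⟨hpS, hωp, m, hm, hmp⟩ := mem_filter.mp hp
    exact ⟨hωp, (hmin m hm).trans (hmono m hm p hpS hωp hmp)⟩
  have hsub : nonnegNbhd S r ω (U.erase n₀) ⊆ nonnegNbhd S r ω U :=
    fun p hp => by
      obtain ⟨hpS, hωp, m, hm, hmp⟩ := mem_filter.mp hp
      exact mem_filter.mpr ⟨hpS, hωp, m, mem_of_mem_erase hm, hmp⟩
  have hrest := ih (U.erase n₀) (erase_ssubset hn₀) ((erase_subset _ _).trans hU)
    (v := fun m => v m - c) (fun m hm => sub_nonneg.mpr (hmin m (mem_of_mem_erase hm)))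
    (fun m hm p hpS hωp hmp => sub_le_sub_right (hmono m (mem_of_mem_erase hm) p hpS hωp hmp) c)
  calc ∑ m ∈ U, -ω m * v m
      = ∑ m ∈ U, -ω m * (v m - c) + c * ∑ m ∈ U, -ω m := by
        rw [mul_sum, ← sum_add_distrib]
        exact sum_congr rfl fun m _ => by ring
    _ = ∑ m ∈ U.erase n₀, -ω m * (v m - c) + c * ∑ m ∈ U, -ω m := by
        rw [← sum_erase_add _ _ hn₀, sub_self, mul_zero, add_zero]
    _ ≤ ∑ p ∈ nonnegNbhd S r ω U, ω p * (v p - c) + c * ∑ p ∈ nonnegNbhd S r ω U, ω p := by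
        gcongr ?_ + ?_
        · exact hrest.trans (sum_le_sum_of_subset_of_nonneg hsub fun p hp _ =>
            mul_nonneg (hnbhd p hp).1 (sub_nonneg.mpr (hnbhd p hp).2))
        · exact mul_le_mul_of_nonneg_left (hall U hU) hc
    _ = ∑ p ∈ nonnegNbhd S r ω U, ω p * v p := by
        rw [mul_sum, ← sum_add_distrib]
        exact sum_congr rfl fun p _ => by ring

open scoped Classical in
theorem sum_mul_nonneg_of_hall
    (hall : ∀ U ⊆ S.filter (ω · < 0), ∑ m ∈ U, -ω m ≤ ∑ p ∈ nonnegNbhd S r ω U, ω p)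
    {v : α → ℝ} (hv : ∀ ℓ ∈ S, 0 ≤ v ℓ)
    (hmono : ∀ n ∈ S, ω n < 0 → ∀ p ∈ S, 0 ≤ ω p → r n p → v n ≤ v p) :
    0 ≤ ∑ ℓ ∈ S, ω ℓ * v ℓ := by
  set N := S.filter (ω · < 0)
  have hN : ∀ n ∈ N, n ∈ S ∧ ω n < 0 := fun n hn => mem_filter.mp hn
  have hmatched := sum_neg_mul_le_sum_nonnegNbhd_mul hall subset_rfl
    (fun n hn => hv n (hN n hn).1) (fun n hn => hmono n (hN n hn).1 (hN n hn).2)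
  have hnbhd : ∑ p ∈ nonnegNbhd S r ω N, ω p * v p ≤ ∑ p ∈ S.filter (¬ ω · < 0), ω p * v p := by
    refine sum_le_sum_of_subset_of_nonneg (fun p hp => ?_) fun p hp _ => ?_
    · obtain ⟨hpS, hωp, -⟩ := mem_filter.mp hp
      exact mem_filter.mpr ⟨hpS, hωp.not_gt⟩
    · obtain ⟨hpS, hωp⟩ := mem_filter.mp hp
      exact mul_nonneg (not_lt.mp hωp) (hv p hpS)
  rw [← sum_filter_add_sum_filter_not S (ω · < 0)]
  simp only [neg_mul, sum_neg_distrib] at hmatched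
  linarith

open scoped Classical in
theorem sum_mul_pos_of_hall
    (hall : ∀ U ⊆ S.filter (ω · < 0), ∑ m ∈ U, -ω m ≤ ∑ p ∈ nonnegNbhd S r ω U, ω p)
    {v : α → ℝ} (hv : ∀ ℓ ∈ S, 0 ≤ v ℓ)
    (hmono : ∀ n ∈ S, ω n < 0 → ∀ p ∈ S, 0 ≤ ω p → r n p → v n ≤ v p)
    (hN : (S.filter (ω · < 0)).Nonempty) {t : α} (ht : t ∈ S) (hωt : 0 < ω t)
    (hlt : ∀ n ∈ S, ω n < 0 → v n < v t) :
    0 < ∑ ℓ ∈ S, ω ℓ * v ℓ := by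
  -- lowering `v t` to `max_N v` keeps the hypotheses, and loses the positive amount `ω t * gap`
  obtain ⟨n₀, hn₀, hmax⟩ := exists_max_image _ v hN
  obtain ⟨hn₀S, hωn₀⟩ := mem_filter.mp hn₀
  set v' := Function.update v t (v n₀)
  have hne : ∀ n, ω n < 0 → n ≠ t := fun n hn h => (h ▸ hn).not_gt hωt
  have hv'nonneg : 0 ≤ ∑ ℓ ∈ S, ω ℓ * v' ℓ := by
    refine sum_mul_nonneg_of_hall hall (fun ℓ hℓ => ?_) fun n hnS hn p hpS hωp hnp => ?_
    · by_cases h : ℓ = t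
      · simpa [v', h] using hv n₀ hn₀S
      · simpa [v', h] using hv ℓ hℓ
    · rw [show v' n = v n by simp [v', hne n hn]]
      by_cases h : p = t
      · simpa [v', h] using hmax n (mem_filter.mpr ⟨hnS, hn⟩)
      · simpa [v', h] using hmono n hnS hn p hpS hωp hnp
  have hdiff : ∑ ℓ ∈ S, ω ℓ * v ℓ = ∑ ℓ ∈ S, ω ℓ * v' ℓ + ω t * (v t - v n₀) := by
    rw [← sum_erase_add _ _ ht, ← sum_erase_add _ _ ht]
    have hrest : ∀ ℓ ∈ S.erase t, ω ℓ * v' ℓ = ω ℓ * v ℓ := fun ℓ hℓ => by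
      simp [v', ne_of_mem_erase hℓ]
    rw [sum_congr rfl hrest]
    simp only [v', Function.update_self]
    ring
  rw [hdiff]
  nlinarith [hlt n₀ hn₀S hωn₀]

end FractionalMatching

section Partitions

variable {d q : ℕ}

lemma mem_Pd {ℓ : Fin d → Fin (d + 1)} :
    ℓ ∈ Pd d ↔ Antitone (fun i => (ℓ i : ℕ)) ∧ ∑ i, (ℓ i : ℕ) = d := by
  simp [Pd, Antitone]

lemma topPart_val (n : ℕ) : (fun i => (topPart (n + 1) i : ℕ)) = Pi.single 0 (n + 1) := by
  ext i
  by_cases hi : i = 0 <;> simp [topPart, hi]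

lemma topPart_mem (d : ℕ) : topPart d ∈ Pd d := by
  cases d with
  | zero => exact mem_Pd.mpr ⟨fun i => i.elim0, by simp⟩
  | succ n =>
    rw [mem_Pd, topPart_val]
    refine ⟨fun i j hij => ?_, by simp⟩
    by_cases hj : j = 0
    · simp [hj, Fin.le_zero_iff.mp (hj ▸ hij)]
    · simp [hj]

lemma eq_single_of_apply_eq_sum {ι : Type*} [Fintype ι] [DecidableEq ι] {a : ι → ℕ} {i : ι}
    (h : a i = ∑ k, a k) : a = Pi.single i (a i) := by
  ext k
  by_cases hki : k = i
  · subst hki; simp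
  · have := add_le_sum (f := a) (fun _ _ => Nat.zero_le _) (mem_univ i) (mem_univ k) (Ne.symm hki)
    simp [hki]
    omega

lemma prefixSum_le_prefixSum_hook {n : ℕ} {a : Fin (n + 2) → ℕ} (hsum : ∑ k, a k = n + 2)
    (ha : a 0 ≤ n + 1) (k : Fin (n + 2)) :
    prefixSum a k ≤ prefixSum (unitTransfer (Pi.single 0 (n + 2)) 0 1) k := by
  have hk := prefixSum_unitTransfer_add_ite (e := Pi.single 0 (n + 2)) zero_ne_one (by simp) k
  simp only [prefixSum, sum_pi_single', mem_filter, mem_univ, true_and, Fin.zero_le,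
    if_true] at hk ⊢
  by_cases h1 : 1 ≤ k
  · rw [if_pos h1] at hk
    have := sum_le_sum_of_subset (f := a) (filter_subset (· ≤ k) univ)
    omega
  · rw [if_neg h1] at hk
    have hk0 : k = 0 := by
      rw [not_le, Fin.lt_one_iff] at h1
      exact h1
    subst hk0
    rw [sum_eq_single_of_mem 0 (by simp) fun m hm hm0 => absurd (Fin.le_zero_iff.mp
      (mem_filter.mp hm).2) hm0]
    omega

lemma symSum_nonneg {x : Fin q → ℝ} (hx : ∀ i, 0 ≤ x i) (ℓ : Fin d → Fin (d + 1)) :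
    0 ≤ symSum d q ℓ x :=
  sum_nonneg fun _ _ => prod_nonneg fun _ _ => by split_ifs; exacts [pow_nonneg (hx _) _, le_rfl]

lemma symSum_le_symSum_of_domLE (hdq : d ≤ q) {x : Fin q → ℝ} (hx : ∀ i, 0 ≤ x i)
    {m p : Fin d → Fin (d + 1)} (hm : m ∈ Pd d) (hp : p ∈ Pd d) (h : domLE m p) :
    symSum d q m x ≤ symSum d q p x := by
  rw [symSum_eq_symSumExp hdq, symSum_eq_symSumExp hdq]
  exact symSumExp_le_of_dominated hx (mem_Pd.mp hm).1
    ((mem_Pd.mp hm).2.trans (mem_Pd.mp hp).2.symm) h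

lemma symSum_lt_symSum_topPart (hd : 2 ≤ d) (hdq : d ≤ q) {x : Fin q → ℝ}
    (hx : ∀ i, 0 ≤ x i) {a b : Fin q} (hab : x a ≠ x b) {ℓ : Fin d → Fin (d + 1)}
    (hℓ : ℓ ∈ Pd d) (hne : ℓ ≠ topPart d) : symSum d q ℓ x < symSum d q (topPart d) x := by
  obtain ⟨n, rfl⟩ : ∃ n, d = n + 2 := ⟨d - 2, by omega⟩
  obtain ⟨hanti, hsum⟩ := mem_Pd.mp hℓ
  have hℓ0 : (ℓ 0 : ℕ) ≤ n + 1 := by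
    refine Nat.le_of_lt_succ (lt_of_le_of_ne (Fin.is_le _) fun h0 => hne ?_)
    have := eq_single_of_apply_eq_sum (a := fun i => (ℓ i : ℕ)) (i := 0) (h0.trans hsum.symm)
    funext i
    exact Fin.ext ((congrFun this i).trans (by rw [h0, ← topPart_val]))
  rw [symSum_eq_symSumExp hdq, symSum_eq_symSumExp hdq, topPart_val]
  exact (symSumExp_le_of_dominated hx hanti (by simpa [sum_unitTransfer] using hsum)
    (prefixSum_le_prefixSum_hook hsum hℓ0)).trans_lt
    (symSumExp_unitTransfer_single_lt hx hab zero_ne_one n)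

lemma symSum_const (hdq : d ≤ q) {ℓ : Fin d → Fin (d + 1)} (hℓ : ℓ ∈ Pd d) (c : ℝ) :
    symSum d q ℓ (fun _ => c) = q.factorial * c ^ d := by
  rw [symSum_eq_symSumExp hdq, symSumExp_const, (mem_Pd.mp hℓ).2]

end Partitions

open scoped Classical in
theorem fractional_matching_gives_positivity
    {d q : ℕ} (hd : 2 ≤ d) (hdq : d ≤ q)
    (ω : (Fin d → Fin (d + 1)) → ℝ)
    (hsum : ∑ ℓ ∈ Pd d, ω ℓ = 0)
    (hmatch : ∀ U ⊆ (Pd d).filter fun ℓ => ω ℓ < 0,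
      ∑ m ∈ U, -ω m ≤
        ∑ ℓ' ∈ (Pd d).filter fun ℓ' => 0 ≤ ω ℓ' ∧ ∃ m ∈ U, domLE m ℓ', ω ℓ') :
    (∀ x : Fin q → ℝ, (∀ i, 0 ≤ x i) → 0 ≤ ∑ ℓ ∈ Pd d, ω ℓ * symSum d q ℓ x) ∧
    (((Pd d).filter fun ℓ => ω ℓ < 0).Nonempty → 0 < ω (topPart d) →
      ∀ x : Fin q → ℝ, (∀ i, 0 ≤ x i) →
        ((∑ ℓ ∈ Pd d, ω ℓ * symSum d q ℓ x) = 0 ↔ ∀ i j, x i = x j)) := by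
  have hmono : ∀ x : Fin q → ℝ, (∀ i, 0 ≤ x i) → ∀ n ∈ Pd d, ω n < 0 → ∀ p ∈ Pd d, 0 ≤ ω p →
      domLE n p → symSum d q n x ≤ symSum d q p x :=
    fun x hx n hn _ p hp _ => symSum_le_symSum_of_domLE hdq hx hn hp
  refine ⟨fun x hx => sum_mul_nonneg_of_hall hmatch (fun ℓ _ => symSum_nonneg hx ℓ) (hmono x hx),
    fun hN htop x hx => ⟨fun h0 => ?_, fun hconst => ?_⟩⟩
  · by_contra! hx'
    obtain ⟨a, b, hab⟩ := hx'
    refine (sum_mul_pos_of_hall hmatch (fun ℓ _ => symSum_nonneg hx ℓ) (hmono x hx) hN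
      (topPart_mem d) htop fun n hn hωn => symSum_lt_symSum_topPart hd hdq hx hab hn ?_).ne' h0
    rintro rfl
    exact hωn.not_gt htop
  · have hx' : x = fun _ => x ⟨0, by omega⟩ := funext fun i => hconst i _
    rw [hx', sum_congr rfl fun ℓ hℓ => by rw [symSum_const hdq hℓ], ← sum_mul, hsum, zero_mul]
end

section
/- Let ℓ ∈ P_d and let 1 ≤ k ≤ d be an integer. If ℓ has at most k − 1 parts equal to 1, then ℓ! = ℓ₁!·ℓ₂!·…·ℓ_d! ≥ 2^{(d−k)/2}. -/
open Finset

open Nat in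
theorem Nat.two_pow_le_factorial_sq {n : ℕ} (hn : n ≠ 1) : 2 ^ n ≤ n ! ^ 2 := by
  rcases Nat.lt_or_ge n 2 with hn2 | hn2
  · interval_cases n <;> simp_all
  induction n, hn2 using Nat.le_induction with
  | base => decide
  | succ n hn2 ih =>
    calc 2 ^ (n + 1) = 2 * 2 ^ n := by ring
      _ ≤ (n + 1) ^ 2 * n ! ^ 2 := Nat.mul_le_mul (by nlinarith) (ih (by omega))
      _ = (n + 1)! ^ 2 := by rw [Nat.factorial_succ, mul_pow]

open Nat in
/-- Parts equal to `1` contribute nothing, every other part `m` contributes `m! ^ 2 ≥ 2 ^ m`. -/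
theorem Finset.two_pow_sum_sub_card_le_prod_factorial_sq {ι : Type*} (s : Finset ι)
    (f : ι → ℕ) : 2 ^ (∑ i ∈ s, f i - #{i ∈ s | f i = 1}) ≤ (∏ i ∈ s, (f i)!) ^ 2 := by
  have hsplit : ∑ i ∈ s, f i = ∑ i ∈ s with f i ≠ 1, f i + #{i ∈ s | f i = 1} := by
    rw [card_eq_sum_ones, sum_filter, sum_filter, ← sum_add_distrib]
    exact sum_congr rfl fun i _ => by split_ifs <;> simp_all
  calc 2 ^ (∑ i ∈ s, f i - #{i ∈ s | f i = 1})
      = ∏ i ∈ s with f i ≠ 1, 2 ^ f i := by rw [hsplit, Nat.add_sub_cancel, prod_pow_eq_pow_sum]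
    _ ≤ ∏ i ∈ s with f i ≠ 1, (f i)! ^ 2 :=
        prod_le_prod' fun i hi => Nat.two_pow_le_factorial_sq (mem_filter.mp hi).2
    _ ≤ ∏ i ∈ s, (f i)! ^ 2 :=
        prod_le_prod_of_subset_of_one_le' (filter_subset _ _) fun i _ _ =>
          Nat.one_le_pow _ _ (factorial_pos _)
    _ = (∏ i ∈ s, (f i)!) ^ 2 := prod_pow _ _ _

theorem Real.rpow_natCast_div_two_le_of_pow_le_sq {x y : ℝ} {n : ℕ} (hx : 0 ≤ x) (hy : 0 ≤ y)
    (h : x ^ n ≤ y ^ 2) : x ^ ((n : ℝ) / 2) ≤ y := by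
  rw [Real.rpow_div_two_eq_sqrt _ hx, Real.rpow_natCast]
  refine le_of_pow_le_pow_left₀ two_ne_zero hy ?_
  rwa [← pow_mul, mul_comm, pow_mul, Real.sq_sqrt hx]

theorem sum_eq_of_mem_Pd {d : ℕ} {ℓ : Fin d → Fin (d + 1)} (hℓ : ℓ ∈ Pd d) :
    ∑ i, (ℓ i : ℕ) = d :=
  (mem_filter.mp hℓ).2.2

theorem lfact_lower_bound_few_ones_general
    {d k : ℕ}
    (ℓ : Fin d → Fin (d + 1)) (hℓ : ℓ ∈ Pd d)
    (hones : bj ℓ 1 ≤ k - 1) :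
    (2 : ℝ) ^ (((d - k : ℕ) : ℝ) / 2) ≤ (lfact ℓ : ℝ) := by
  have hsq : 2 ^ (d - bj ℓ 1) ≤ lfact ℓ ^ 2 := by
    have := univ.two_pow_sum_sub_card_le_prod_factorial_sq fun i => (ℓ i : ℕ)
    rwa [sum_eq_of_mem_Pd hℓ] at this
  refine Real.rpow_natCast_div_two_le_of_pow_le_sq zero_le_two (Nat.cast_nonneg _) ?_
  exact_mod_cast (Nat.pow_le_pow_right two_pos (by omega : d - k ≤ d - bj ℓ 1)).trans hsq

theorem lfact_lower_bound_few_ones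
    {d k : ℕ} (hk1 : 1 ≤ k) (hkd : k ≤ d)
    (ℓ : Fin d → Fin (d + 1)) (hℓ : ℓ ∈ Pd d)
    (hones : bj ℓ 1 ≤ k - 1) :
    (2 : ℝ) ^ (((d - k : ℕ) : ℝ) / 2) ≤ (lfact ℓ : ℝ) :=
  lfact_lower_bound_few_ones_general ℓ hℓ hones
end

section
/- Let d ≥ 2 and 1 ≤ k ≤ d be integers. Then (1/d^d) · Σ_{ℓ∈P_d} binom(d,ℓ)² · multinom(d, b(ℓ)) ≤ d! · ( d! · d^{−k} · p(d−k) + 2^{−(d−k)/2} ), where p(m) denotes the number of partitions of the integer m (with p(0) = 1). -/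
open Finset

/-!
Each composition `n` of `d` into `d` parts sorts to a unique partition `ℓ`, and
`binom(d,ℓ)² · binom(d, b(ℓ))` is the sum of `binom(d,n)²` over the rearrangements `n` of `ℓ`; so
the left side is at most `d^{-d} ∑_n binom(d,n)²`. A composition with `z` zero parts exceeds
`(1,…,1)` by `z` in total, whence `2^z · binom(d,n) ≤ d!`, and there are at most `2^z d^{2z}` such
compositions. Those with `2z < d - k` thus contribute at most `d!² d^{d-k}`, while for the others
`binom(d,n)² ≤ d! 2^{-(d-k)/2} binom(d,n)` and `∑_n binom(d,n) = d^d`. Finally `p(d - k) ≥ 1`.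
-/

open scoped Nat

lemma Nat.two_pow_sub_one_le_factorial : ∀ a : ℕ, 2 ^ (a - 1) ≤ a !
  | 0 | 1 => le_rfl
  | a + 2 => by
    have ih := Nat.two_pow_sub_one_le_factorial (a + 1)
    rw [Nat.add_sub_cancel] at ih
    rw [Nat.factorial_succ, show a + 2 - 1 = a + 1 by omega, pow_succ]
    nlinarith

lemma Nat.choose_mul_multichoose_le (d z : ℕ) :
    d.choose z * d.multichoose z ≤ 2 ^ z * d ^ (2 * z) := by
  rcases le_or_gt z d with hz | hz
  · calc d.choose z * d.multichoose z ≤ d ^ z * (2 * d) ^ z := by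
          refine Nat.mul_le_mul (Nat.choose_le_pow d z) ?_
          rw [Nat.multichoose_eq]
          exact (Nat.choose_le_pow _ z).trans (Nat.pow_le_pow_left (by omega) z)
      _ = 2 ^ z * d ^ (2 * z) := by ring
  · simp [Nat.choose_eq_zero_of_lt hz]

section PermOrbit

variable {ι α : Type*} [Fintype ι] [DecidableEq ι] [DecidableEq α]

def permOrbit (f : ι → α) : Finset (ι → α) :=
  univ.image fun σ : Equiv.Perm ι => f ∘ σ

lemma card_permOrbit_mul_card_stabilizer (f : ι → α) :
    #(permOrbit f) * Fintype.card {σ : Equiv.Perm ι // f ∘ σ = f} = (Fintype.card ι)! := by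
  have hfiber : ∀ g ∈ permOrbit f,
      #{σ : Equiv.Perm ι | f ∘ σ = g} = Fintype.card {σ : Equiv.Perm ι // f ∘ σ = f} := by
    intro g hg
    obtain ⟨σ₀, -, rfl⟩ := mem_image.1 hg
    rw [Fintype.card_subtype]
    refine (card_equiv (Equiv.mulRight σ₀) fun σ => ?_).symm
    simp only [mem_filter, mem_univ, true_and, Equiv.coe_mulRight, Equiv.Perm.coe_mul,
      ← Function.comp_assoc]
    exact σ₀.surjective.injective_comp_right.eq_iff.symm
  rw [← Fintype.card_perm, ← card_univ (α := Equiv.Perm ι),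
    card_eq_sum_card_image (fun σ : Equiv.Perm ι => f ∘ σ), ← permOrbit, sum_congr rfl hfiber,
    sum_const, smul_eq_mul]

lemma card_permOrbit_mul_prod_factorial [Fintype α] (f : ι → α) :
    #(permOrbit f) * ∏ a, (Fintype.card {i // f i = a})! = (Fintype.card ι)! := by
  rw [← DomMulAct.stabilizer_card, card_permOrbit_mul_card_stabilizer]

lemma disjoint_permOrbit_of_antitone [PartialOrder α] {n : ℕ} {f g : Fin n → α}
    (hf : Antitone f) (hg : Antitone g) (hfg : f ≠ g) : Disjoint (permOrbit f) (permOrbit g) := by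
  refine disjoint_left.2 fun h hf' hg' => hfg ?_
  obtain ⟨σ, -, rfl⟩ := mem_image.1 hf'
  obtain ⟨τ, -, hτ⟩ := mem_image.1 hg'
  have hg_eq : g = f ∘ ⇑(σ * τ⁻¹) := by
    ext i
    simpa using congrFun hτ (τ⁻¹ i)
  rw [hg_eq] at hg ⊢
  simpa using Tuple.unique_antitone (σ := 1) hf hg

end PermOrbit

section Compositions

variable {d : ℕ}

def compositions (d : ℕ) : Finset (Fin d → Fin (d + 1)) :=
  univ.filter fun n => ∑ i, (n i : ℕ) = d

lemma antitone_of_mem_Pd {ℓ : Fin d → Fin (d + 1)} (hℓ : ℓ ∈ Pd d) : Antitone ℓ :=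
  fun i j hij => (mem_filter.1 hℓ).2.1 i j hij

lemma prod_factorial_card_fiber_eq (ℓ : Fin d → Fin (d + 1)) :
    ∏ v, (Fintype.card {i // ℓ i = v})! = (bj ℓ 0)! * ∏ j ∈ Icc 1 d, (bj ℓ j)! := by
  have hcard : ∀ v : Fin (d + 1), Fintype.card {i // ℓ i = v} = bj ℓ v := fun v => by
    simp only [Fintype.card_subtype, bj, Fin.val_inj]
  have hrange : range (d + 1) = insert 0 (Icc 1 d) := by
    ext m; simp only [mem_range, mem_insert, mem_Icc]; omega
  simp only [hcard]
  rw [Fin.prod_univ_eq_prod_range (fun j => (bj ℓ j)!), hrange, prod_insert (by simp)]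

lemma qmultinom_self_eq_card_permOrbit (ℓ : Fin d → Fin (d + 1)) :
    qmultinom d d ℓ = #(permOrbit ℓ) := by
  have h := card_permOrbit_mul_prod_factorial ℓ
  rw [Fintype.card_fin, prod_factorial_card_fiber_eq] at h
  rw [qmultinom, b0, Nat.sub_self, add_zero, ← h, Nat.mul_div_cancel _ (by positivity)]

lemma dchoose_comp_perm (ℓ : Fin d → Fin (d + 1)) (σ : Equiv.Perm (Fin d)) :
    dchoose d (ℓ ∘ σ) = dchoose d ℓ := by
  simp only [dchoose, lfact, Function.comp_apply, Equiv.prod_comp σ fun i => (ℓ i : ℕ)!]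

lemma permOrbit_subset_compositions {ℓ : Fin d → Fin (d + 1)} (hℓ : ℓ ∈ Pd d) :
    permOrbit ℓ ⊆ compositions d := by
  intro n hn
  obtain ⟨σ, -, rfl⟩ := mem_image.1 hn
  simpa [compositions, Equiv.sum_comp σ fun i => (ℓ i : ℕ)] using (mem_filter.1 hℓ).2.2

lemma sum_Pd_le_sum_compositions :
    ∑ ℓ ∈ Pd d, dchoose d ℓ ^ 2 * qmultinom d d ℓ ≤ ∑ n ∈ compositions d, dchoose d n ^ 2 := by
  have horbit : ∀ ℓ ∈ Pd d, dchoose d ℓ ^ 2 * qmultinom d d ℓ =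
      ∑ n ∈ permOrbit ℓ, dchoose d n ^ 2 := by
    intro ℓ _
    rw [qmultinom_self_eq_card_permOrbit, mul_comm, ← smul_eq_mul, ← sum_const]
    refine sum_congr rfl fun n hn => ?_
    obtain ⟨σ, -, rfl⟩ := mem_image.1 hn
    rw [dchoose_comp_perm]
  rw [sum_congr rfl horbit, ← sum_biUnion fun ℓ hℓ ℓ' hℓ' hne =>
    disjoint_permOrbit_of_antitone (antitone_of_mem_Pd hℓ) (antitone_of_mem_Pd hℓ') hne]
  exact sum_le_sum_of_subset (biUnion_subset.2 fun ℓ hℓ => permOrbit_subset_compositions hℓ)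

lemma sum_dchoose_compositions : ∑ n ∈ compositions d, dchoose d n = d ^ d := by
  have hmultinomial := sum_pow_eq_sum_piAntidiag (univ : Finset (Fin d)) (fun _ => (1 : ℕ)) d
  simp only [sum_const, card_univ, Fintype.card_fin, smul_eq_mul, mul_one, one_pow,
    prod_const_one, Nat.cast_id] at hmultinomial
  rw [hmultinomial]
  have hle : ∀ c ∈ piAntidiag (univ : Finset (Fin d)) d, ∀ i, c i ≤ d := fun c hc i =>
    (mem_piAntidiag.1 hc).1 ▸ single_le_sum (by simp) (mem_univ i)
  refine sum_nbij' (fun n i => (n i : ℕ)) (fun c i => Fin.ofNat (d + 1) (c i)) ?_ ?_ ?_ ?_ ?_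
  · intro n hn
    simpa [compositions] using hn
  · intro c hc
    simp [compositions, Nat.mod_eq_of_lt (Nat.lt_succ_of_le (hle c hc _)),
      (mem_piAntidiag.1 hc).1]
  · intro n _
    ext i
    simp
  · intro c hc
    ext i
    simp [Nat.mod_eq_of_lt (Nat.lt_succ_of_le (hle c hc i))]
  · intro n hn
    rw [dchoose, Nat.multinomial, (mem_filter.1 hn).2, lfact]

lemma sum_sub_one_eq_bj_zero {n : Fin d → Fin (d + 1)} (hn : n ∈ compositions d) :
    ∑ i, ((n i : ℕ) - 1) = bj n 0 := by
  have hpred : ∀ i, ((n i : ℕ) - 1) + 1 = n i + if (n i : ℕ) = 0 then 1 else 0 := by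
    intro i; split_ifs <;> omega
  have h := sum_congr rfl fun i (_ : i ∈ univ) => hpred i
  rw [sum_add_distrib, sum_add_distrib, ← card_filter, (mem_filter.1 hn).2] at h
  simp only [sum_const, card_univ, Fintype.card_fin, smul_eq_mul, mul_one] at h
  rw [bj]; omega

lemma two_pow_bj_zero_le_lfact {n : Fin d → Fin (d + 1)} (hn : n ∈ compositions d) :
    2 ^ bj n 0 ≤ lfact n := by
  rw [← sum_sub_one_eq_bj_zero hn, ← prod_pow_eq_pow_sum]
  exact prod_le_prod' fun i _ => Nat.two_pow_sub_one_le_factorial _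

lemma two_pow_bj_zero_mul_dchoose_le {n : Fin d → Fin (d + 1)} (hn : n ∈ compositions d) :
    2 ^ bj n 0 * dchoose d n ≤ d ! :=
  (Nat.mul_le_mul_right _ (two_pow_bj_zero_le_lfact hn)).trans (Nat.mul_div_le _ _)

/-- A composition is determined by its set of zero parts and the multiset of its excesses
`n i - 1`, a multiset of size `bj n 0`. -/
lemma card_filter_bj_zero_eq_le (z : ℕ) :
    #{n ∈ compositions d | bj n 0 = z} ≤ d.choose z * d.multichoose z := by
  let encode (n : Fin d → Fin (d + 1)) : Finset (Fin d) × Multiset (Fin d) :=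
    (univ.filter fun i => (n i : ℕ) = 0, ∑ i, Multiset.replicate ((n i : ℕ) - 1) i)
  have hcount (n : Fin d → Fin (d + 1)) (i : Fin d) : (encode n).2.count i = (n i : ℕ) - 1 := by
    simp [encode, Multiset.count_sum', Multiset.count_replicate]
  have hinj : Function.Injective encode := by
    intro n m hnm
    ext i
    have hzero : (n i : ℕ) = 0 ↔ (m i : ℕ) = 0 := by
      simpa [encode] using congrArg (fun e => i ∈ e.1) hnm
    have hexcess : (n i : ℕ) - 1 = (m i : ℕ) - 1 := by rw [← hcount, ← hcount, hnm]
    omega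
  have hmaps : ∀ n ∈ {n ∈ compositions d | bj n 0 = z}, encode n ∈
      powersetCard z univ ×ˢ (univ : Finset (Sym (Fin d) z)).image (↑) := by
    intro n hn
    obtain ⟨hcomp, rfl⟩ := mem_filter.1 hn
    refine mem_product.2
      ⟨mem_powersetCard.2 ⟨subset_univ _, by rfl⟩, mem_image.2 ⟨⟨_, ?_⟩, mem_univ _, rfl⟩⟩
    simp [sum_sub_one_eq_bj_zero hcomp]
  refine (card_le_card_of_injOn encode hmaps hinj.injOn).trans_eq ?_
  rw [card_product, card_powersetCard, card_image_of_injective _ Sym.coe_injective, card_univ,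
    card_univ, Fintype.card_fin, Sym.card_sym_eq_multichoose, Fintype.card_fin]

lemma dchoose_le_factorial_div_two_pow {n : Fin d → Fin (d + 1)} (hn : n ∈ compositions d) :
    (dchoose d n : ℝ) ≤ d ! / 2 ^ bj n 0 := by
  rw [le_div_iff₀ (by positivity), mul_comm]
  exact_mod_cast two_pow_bj_zero_mul_dchoose_le hn

lemma sum_sq_dchoose_filter_bj_zero_eq_le (z : ℕ) :
    ∑ n ∈ compositions d with bj n 0 = z, (dchoose d n : ℝ) ^ 2 ≤ (d ! : ℝ) ^ 2 * d ^ (2 * z) := by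
  have hterm : ∀ n ∈ {n ∈ compositions d | bj n 0 = z},
      (dchoose d n : ℝ) ^ 2 ≤ (d ! / 2 ^ z) ^ 2 := by
    intro n hn
    obtain ⟨hcomp, rfl⟩ := mem_filter.1 hn
    gcongr
    exact dchoose_le_factorial_div_two_pow hcomp
  have hcard : (#{n ∈ compositions d | bj n 0 = z} : ℝ) ≤ 2 ^ z * d ^ (2 * z) := by
    exact_mod_cast (card_filter_bj_zero_eq_le z).trans (Nat.choose_mul_multichoose_le d z)
  calc ∑ n ∈ compositions d with bj n 0 = z, (dchoose d n : ℝ) ^ 2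
      ≤ #{n ∈ compositions d | bj n 0 = z} * (d ! / 2 ^ z : ℝ) ^ 2 := by
        simpa using sum_le_card_nsmul _ _ _ hterm
    _ ≤ 2 ^ z * d ^ (2 * z) * (d ! / 2 ^ z : ℝ) ^ 2 := by gcongr
    _ = (d ! : ℝ) ^ 2 * d ^ (2 * z) / 2 ^ z := by field_simp
    _ ≤ (d ! : ℝ) ^ 2 * d ^ (2 * z) := div_le_self (by positivity) (one_le_pow₀ one_le_two)

lemma sum_sq_dchoose_filter_lt_le (hd : 2 ≤ d) (j : ℕ) :
    ∑ n ∈ compositions d with 2 * bj n 0 < j, (dchoose d n : ℝ) ^ 2 ≤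
      (d ! : ℝ) ^ 2 * d ^ j := by
  set zeros := (range j).filter fun z => 2 * z < j
  have hgeom : ∑ z ∈ zeros, d ^ (2 * z) < d ^ j := by
    rw [← sum_image fun _ _ _ _ h => by omega]
    exact Nat.geomSum_lt hd fun k hk => by
      obtain ⟨z, hz, rfl⟩ := mem_image.1 hk
      exact (mem_filter.1 hz).2
  rw [← sum_fiberwise_of_maps_to (g := fun n => bj n 0) (t := zeros) fun n hn => by
    simp only [zeros, mem_filter, mem_range] at hn ⊢; omega]
  calc _ ≤ ∑ z ∈ zeros, (d ! : ℝ) ^ 2 * d ^ (2 * z) := by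
        refine sum_le_sum fun z _ => le_trans ?_ (sum_sq_dchoose_filter_bj_zero_eq_le z)
        rw [filter_filter]
        refine sum_le_sum_of_subset_of_nonneg (fun n hn => ?_) fun _ _ _ => by positivity
        simp only [mem_filter] at hn ⊢
        exact ⟨hn.1, hn.2.2⟩
    _ = (d ! : ℝ) ^ 2 * ((∑ z ∈ zeros, d ^ (2 * z) : ℕ) : ℝ) := by push_cast; rw [mul_sum]
    _ ≤ (d ! : ℝ) ^ 2 * d ^ j := by gcongr; exact_mod_cast hgeom.le

lemma sum_sq_dchoose_filter_not_lt_le (j : ℕ) :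
    ∑ n ∈ compositions d with ¬ 2 * bj n 0 < j, (dchoose d n : ℝ) ^ 2 ≤
      d ! * (2 ^ ((j : ℝ) / 2))⁻¹ * d ^ d := by
  have hterm : ∀ n ∈ {n ∈ compositions d | ¬ 2 * bj n 0 < j},
      (dchoose d n : ℝ) ^ 2 ≤ d ! * (2 ^ ((j : ℝ) / 2))⁻¹ * dchoose d n := by
    intro n hn
    obtain ⟨hcomp, hj⟩ := mem_filter.1 hn
    have hpow : (2 : ℝ) ^ ((j : ℝ) / 2) ≤ 2 ^ bj n 0 := by
      rw [← Real.rpow_natCast]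
      refine Real.rpow_le_rpow_of_exponent_le one_le_two ?_
      rw [div_le_iff₀ two_pos]
      exact_mod_cast (by omega)
    rw [sq]
    gcongr
    calc (dchoose d n : ℝ) ≤ d ! / 2 ^ bj n 0 := dchoose_le_factorial_div_two_pow hcomp
      _ ≤ d ! * (2 ^ ((j : ℝ) / 2))⁻¹ := by rw [div_eq_mul_inv]; gcongr
  calc _ ≤ ∑ n ∈ compositions d with ¬ 2 * bj n 0 < j,
        d ! * (2 ^ ((j : ℝ) / 2))⁻¹ * (dchoose d n : ℝ) := sum_le_sum hterm
    _ ≤ ∑ n ∈ compositions d, d ! * (2 ^ ((j : ℝ) / 2))⁻¹ * (dchoose d n : ℝ) :=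
        sum_le_sum_of_subset_of_nonneg (filter_subset _ _) fun _ _ _ => by positivity
    _ = d ! * (2 ^ ((j : ℝ) / 2))⁻¹ * d ^ d := by
        rw [← mul_sum, ← Nat.cast_sum, sum_dchoose_compositions, Nat.cast_pow]

lemma sum_sq_dchoose_compositions_le (hd : 2 ≤ d) (j : ℕ) :
    ∑ n ∈ compositions d, (dchoose d n : ℝ) ^ 2 ≤
      (d ! : ℝ) ^ 2 * d ^ j + d ! * (2 ^ ((j : ℝ) / 2))⁻¹ * d ^ d := by
  rw [← sum_filter_add_sum_filter_not _ fun n => 2 * bj n 0 < j]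
  exact add_le_add (sum_sq_dchoose_filter_lt_le hd j) (sum_sq_dchoose_filter_not_lt_le j)

end Compositions

theorem Aconst_upper_bound_at_q_eq_d_general
    {d k : ℕ} (hd : 2 ≤ d) (hkd : k ≤ d) :
    ((d : ℝ) ^ d)⁻¹ * ∑ ℓ ∈ Pd d, (dchoose d ℓ : ℝ) ^ 2 * (qmultinom d d ℓ : ℝ) ≤
      (d.factorial : ℝ) *
        ((d.factorial : ℝ) * ((d : ℝ) ^ k)⁻¹ * (Fintype.card (Nat.Partition (d - k)) : ℝ) +
          ((2 : ℝ) ^ (((d - k : ℕ) : ℝ) / 2))⁻¹) := by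
  have hsum : ∑ ℓ ∈ Pd d, (dchoose d ℓ : ℝ) ^ 2 * (qmultinom d d ℓ : ℝ) ≤
      ∑ n ∈ compositions d, (dchoose d n : ℝ) ^ 2 := by
    exact_mod_cast sum_Pd_le_sum_compositions
  have hpartitions : (1 : ℝ) ≤ Fintype.card (Nat.Partition (d - k)) := by
    exact_mod_cast Fintype.card_pos
  have hpow : (d : ℝ) ^ (d - k) * d ^ k = d ^ d := by rw [← pow_add, Nat.sub_add_cancel hkd]
  calc _ ≤ ((d : ℝ) ^ d)⁻¹ * ((d ! : ℝ) ^ 2 * d ^ (d - k) +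
        d ! * (2 ^ (((d - k : ℕ) : ℝ) / 2))⁻¹ * d ^ d) := by
        gcongr; exact hsum.trans (sum_sq_dchoose_compositions_le hd (d - k))
    _ = d ! * (d ! * ((d : ℝ) ^ k)⁻¹ + (2 ^ (((d - k : ℕ) : ℝ) / 2))⁻¹) := by
        rw [← hpow]; field_simp
    _ ≤ _ := by gcongr _ * (?_ + _); exact le_mul_of_one_le_right (by positivity) hpartitions

theorem Aconst_upper_bound_at_q_eq_d
    {d k : ℕ} (hd : 2 ≤ d) (hk1 : 1 ≤ k) (hkd : k ≤ d) :
    ((d : ℝ) ^ d)⁻¹ * ∑ ℓ ∈ Pd d, (dchoose d ℓ : ℝ) ^ 2 * (qmultinom d d ℓ : ℝ) ≤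
      (d.factorial : ℝ) *
        ((d.factorial : ℝ) * ((d : ℝ) ^ k)⁻¹ * (Fintype.card (Nat.Partition (d - k)) : ℝ) +
          ((2 : ℝ) ^ (((d - k : ℕ) : ℝ) / 2))⁻¹) :=
  Aconst_upper_bound_at_q_eq_d_general hd hkd
end
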